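/- arXiv:2509.05039 — 7 statements merged into one kernel-verified Lean document; each statement's English description precedes it below -/
import Mathlib

section
/- Let $g:\mathbb{R}\to\mathbb{R}^d$ be $C^2$ and let $G:\mathbb{R}^d\times\mathbb{R}\to\mathbb{R}$ be $C^1$ and non-decreasing in its last variable $v$. Define $F(t,x,v)=G(x-g'(v)t,\,v)$ (the solution of $\partial_t F + g'(v)\cdot\nabla_x F=0$ with data $G$). Then $F(t,x,\cdot)$ is non-decreasing in $v$ for all $t\ge 0$ and all $x$ if and only if $g''(v)\cdot \nabla_x G(x,v)\le 0$ for all $(x,v)$. -/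
/-! Along `w ↦ (x - t • g' w, w)` the chain rule gives
`∂ᵥ F (t, x, v) = -t ⟪g'' v, ∇ₓG⟫ + ∂ᵥG`, both evaluated at `(x - t • g' v, v)`.
If `⟪g'', ∇ₓG⟫ ≤ 0`, both terms are nonnegative for `t ≥ 0`. Conversely, choosing
`x = y + t • g' v` evaluates this at `(y, v)`, so `t ⟪g'' v, ∇ₓG (y, v)⟫ ≤ ∂ᵥG (y, v)` for all
`t > 0`; letting `t → ∞` gives `⟪g'' v, ∇ₓG (y, v)⟫ ≤ 0`. -/

section PartialDerivatives

variable {E : Type*} [NormedAddCommGroup E] {G : E × ℝ → ℝ} {x : E} {v : ℝ}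

lemma hasDerivAt_fderiv_apply_inr [NormedSpace ℝ E] (hG : DifferentiableAt ℝ G (x, v)) :
    HasDerivAt (fun w => G (x, w)) (fderiv ℝ G (x, v) (0, 1)) v :=
  hG.hasFDerivAt.comp_hasDerivAt v ((hasDerivAt_const v x).prodMk (hasDerivAt_id v))

lemma fderiv_apply_inr_nonneg [NormedSpace ℝ E] (hG : DifferentiableAt ℝ G (x, v))
    (hmono : Monotone fun w => G (x, w)) : 0 ≤ fderiv ℝ G (x, v) (0, 1) :=
  (hasDerivAt_fderiv_apply_inr hG).deriv ▸ hmono.deriv_nonneg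

variable [InnerProductSpace ℝ E] [CompleteSpace E] {gradG : E}

lemma fderiv_apply_inl_eq_inner (hG : DifferentiableAt ℝ G (x, v))
    (hgrad : HasGradientAt (fun y => G (y, v)) gradG x) (a : E) :
    fderiv ℝ G (x, v) (a, 0) = inner ℝ gradG a := by
  have hcomp : HasFDerivAt (fun y => G (y, v))
      ((fderiv ℝ G (x, v)).comp ((ContinuousLinearMap.id ℝ E).prod 0)) x :=
    hG.hasFDerivAt.comp x ((hasFDerivAt_id x).prodMk (hasFDerivAt_const v x))
  simpa using congr($(hcomp.unique (hasGradientAt_iff_hasFDerivAt.mp hgrad)) a)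

lemma hasDerivAt_comp_sub_smul {φ : ℝ → E} {φ' : E} {t : ℝ}
    (hG : DifferentiableAt ℝ G (x - t • φ v, v)) (hφ : HasDerivAt φ φ' v)
    (hgrad : HasGradientAt (fun y => G (y, v)) gradG (x - t • φ v)) :
    HasDerivAt (fun w => G (x - t • φ w, w))
      (-(t * inner ℝ φ' gradG) + fderiv ℝ G (x - t • φ v, v) (0, 1)) v := by
  have hcurve : HasDerivAt (fun w => (x - t • φ w, w)) (-(t • φ'), (1 : ℝ)) v :=
    (hφ.const_smul t).const_sub x |>.prodMk (hasDerivAt_id v)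
  have hsplit : ((-(t • φ'), (1 : ℝ)) : E × ℝ) = (-(t • φ'), 0) + (0, 1) := by simp
  have := hG.hasFDerivAt.comp_hasDerivAt (f := fun w => (x - t • φ w, w)) v hcurve
  rwa [hsplit, map_add, fderiv_apply_inl_eq_inner hG hgrad, inner_neg_right,
    real_inner_smul_right, real_inner_comm] at this

end PartialDerivatives

lemma nonpos_of_forall_pos_mul_le {a b : ℝ} (h : ∀ t, 0 < t → t * a ≤ b) : a ≤ 0 := by
  by_contra! ha
  have := h ((|b| + 1) / a) (by positivity)
  rw [div_mul_cancel₀ _ ha.ne'] at this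
  linarith [le_abs_self b]

theorem stmt_0 {d : ℕ}
    (g : ℝ → EuclideanSpace ℝ (Fin d)) (hg : ContDiff ℝ 2 g)
    (G : EuclideanSpace ℝ (Fin d) × ℝ → ℝ) (hG : ContDiff ℝ 1 G)
    (hGmono : ∀ x : EuclideanSpace ℝ (Fin d), Monotone fun v => G (x, v))
    (gradG : EuclideanSpace ℝ (Fin d) → ℝ → EuclideanSpace ℝ (Fin d))
    (hgrad : ∀ x v, HasGradientAt (fun y => G (y, v)) (gradG x v) x) :
    (∀ t : ℝ, 0 ≤ t → ∀ x : EuclideanSpace ℝ (Fin d),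
        Monotone fun v => G (x - t • deriv g v, v)) ↔
      ∀ (x : EuclideanSpace ℝ (Fin d)) (v : ℝ),
        (inner ℝ (deriv (deriv g) v) (gradG x v) : ℝ) ≤ 0 := by
  have hGd : Differentiable ℝ G := hG.differentiable one_ne_zero
  have hg' : Differentiable ℝ (deriv g) :=
    (hg.iterate_deriv' 1 1).differentiable one_ne_zero
  have hF v t x :=
    hasDerivAt_comp_sub_smul (hGd _) (hg' v).hasDerivAt (hgrad (x - t • deriv g v) v)
  constructor
  · intro hmono y v
    refine nonpos_of_forall_pos_mul_le (b := fderiv ℝ G (y, v) (0, 1)) fun t ht => ?_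
    have hderiv := (hF v t (y + t • deriv g v)).deriv ▸ (hmono t ht.le _).deriv_nonneg
    simp only [add_sub_cancel_right] at hderiv
    linarith
  · intro hinner t ht x
    refine monotone_of_deriv_nonneg (fun v => (hF v t x).differentiableAt) fun v => ?_
    rw [(hF v t x).deriv]
    have hGv := fderiv_apply_inr_nonneg (hGd (x - t • deriv g v, v)) (hGmono (x - t • deriv g v))
    linarith [mul_nonpos_of_nonneg_of_nonpos ht (hinner (x - t • deriv g v) v)]
end

section
/- Let $g:\mathbb{R}\to\mathbb{R}^d$ be $C^2$, $G:\mathbb{R}^d\times\mathbb{R}\to\mathbb{R}$ be $C^1$ with $\partial_v G\ge 0$, and set $F(t,x,v)=G(x-g'(v)t,v)$. If there exist $(x_0,v_0)$ with $g''(v_0)\cdot\nabla_x G(x_0,v_0)>0$, then there exist $t>0$ and $x\in\mathbb{R}^d$ such that $\partial_v F(t,x,v_0)<0$; explicitly, any $t>\partial_v G(x_0,v_0)/(g''(v_0)\cdot\nabla_x G(x_0,v_0))$ and $x=x_0+g'(v_0)t$ works. -/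
/-!
Along the characteristic through `(x₀, v₀)` the chain rule gives
`∂_v F(t, x₀ + t g'(v₀), v₀) = ∂_v G(x₀, v₀) - t ⟪g''(v₀), ∇ₓG(x₀, v₀)⟫`,
an affine function of `t` with negative slope, so it becomes negative once `t` exceeds the
ratio `∂_v G / ⟪g'', ∇ₓG⟫`.
-/

open Real Set

section PartialDerivatives

variable {E : Type*} [NormedAddCommGroup E] [InnerProductSpace ℝ E]
  {G : E × ℝ → ℝ} {x : E} {v : ℝ}

theorem fderiv_apply_inl_of_hasGradientAt [CompleteSpace E] (hG : DifferentiableAt ℝ G (x, v))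
    {gradG : E} (hgrad : HasGradientAt (fun y => G (y, v)) gradG x) (u : E) :
    fderiv ℝ G (x, v) (u, 0) = inner ℝ gradG u := by
  have hcomp := hG.hasFDerivAt.comp x (hasFDerivAt_prodMk_left (𝕜 := ℝ) x v)
  simpa [InnerProductSpace.toDual_apply_apply] using
    DFunLike.congr_fun (hcomp.unique hgrad.hasFDerivAt) u

theorem fderiv_apply_inr_of_hasDerivAt (hG : DifferentiableAt ℝ G (x, v)) {Gv : ℝ}
    (hGv : HasDerivAt (fun w => G (x, w)) Gv v) :
    fderiv ℝ G (x, v) (0, 1) = Gv :=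
  (hG.hasFDerivAt.comp_hasDerivAt v ((hasDerivAt_const v x).prodMk (hasDerivAt_id v))).unique hGv

theorem hasDerivAt_comp_prodMk_of_partials [CompleteSpace E] (hG : DifferentiableAt ℝ G (x, v))
    {gradG : E} (hgrad : HasGradientAt (fun y => G (y, v)) gradG x) {Gv : ℝ}
    (hGv : HasDerivAt (fun w => G (x, w)) Gv v) {φ : ℝ → E} {φ' : E} (hφ : HasDerivAt φ φ' v)
    (hφv : φ v = x) :
    HasDerivAt (fun w => G (φ w, w)) (inner ℝ gradG φ' + Gv) v := by
  subst hφv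
  have hcomp := hG.hasFDerivAt.comp_hasDerivAt (f := fun w => (φ w, w)) v
    (hφ.prodMk (hasDerivAt_id v))
  have hsplit : ((φ', 1) : E × ℝ) = (φ', 0) + (0, 1) := by simp
  rwa [hsplit, map_add, fderiv_apply_inl_of_hasGradientAt hG hgrad,
    fderiv_apply_inr_of_hasDerivAt hG hGv] at hcomp

end PartialDerivatives

theorem stmt_1_general {d : ℕ}
    (g : ℝ → EuclideanSpace ℝ (Fin d)) (hg : ContDiff ℝ 2 g)
    (G : EuclideanSpace ℝ (Fin d) × ℝ → ℝ) (hG : ContDiff ℝ 1 G)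
    (gradG : EuclideanSpace ℝ (Fin d) → ℝ → EuclideanSpace ℝ (Fin d))
    (hgrad : ∀ x v, HasGradientAt (fun y => G (y, v)) (gradG x v) x)
    (Gv : EuclideanSpace ℝ (Fin d) → ℝ → ℝ)
    (hGv : ∀ x v, HasDerivAt (fun w => G (x, w)) (Gv x v) v)
    (x₀ : EuclideanSpace ℝ (Fin d)) (v₀ : ℝ)
    (hpos : 0 < (inner ℝ (deriv (deriv g) v₀) (gradG x₀ v₀) : ℝ)) :
    (∃ t > (0:ℝ), ∃ x : EuclideanSpace ℝ (Fin d),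
        deriv (fun v => G (x - t • deriv g v, v)) v₀ < 0) ∧
    ∀ t : ℝ, Gv x₀ v₀ / (inner ℝ (deriv (deriv g) v₀) (gradG x₀ v₀) : ℝ) < t →
      deriv (fun v => G (x₀ + t • deriv g v₀ - t • deriv g v, v)) v₀ < 0 := by
  set κ := (inner ℝ (deriv (deriv g) v₀) (gradG x₀ v₀) : ℝ)
  have hg'' : HasDerivAt (deriv g) (deriv (deriv g) v₀) v₀ :=
    ((contDiff_succ_iff_deriv.mp hg).2.2.differentiable one_ne_zero v₀).hasDerivAt
  have hderiv : ∀ t : ℝ,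
      deriv (fun v => G (x₀ + t • deriv g v₀ - t • deriv g v, v)) v₀ = Gv x₀ v₀ - t * κ := by
    intro t
    have hchar : HasDerivAt (fun v => x₀ + t • deriv g v₀ - t • deriv g v)
        (-(t • deriv (deriv g) v₀)) v₀ := (hg''.const_smul t).const_sub _
    rw [(hasDerivAt_comp_prodMk_of_partials (hG.differentiable one_ne_zero _) (hgrad x₀ v₀)
      (hGv x₀ v₀) hchar (add_sub_cancel_right _ _)).deriv, inner_neg_right, real_inner_smul_right,
      real_inner_comm]
    ring
  have hneg : ∀ t, Gv x₀ v₀ / κ < t →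
      deriv (fun v => G (x₀ + t • deriv g v₀ - t • deriv g v, v)) v₀ < 0 := by
    intro t ht
    rw [hderiv, sub_neg]
    exact (div_lt_iff₀ hpos).mp ht
  obtain ⟨t, ht⟩ := exists_gt (max (Gv x₀ v₀ / κ) 0)
  exact ⟨⟨t, (le_max_right _ _).trans_lt ht, x₀ + t • deriv g v₀,
    hneg t ((le_max_left _ _).trans_lt ht)⟩, hneg⟩

theorem stmt_1 {d : ℕ}
    (g : ℝ → EuclideanSpace ℝ (Fin d)) (hg : ContDiff ℝ 2 g)
    (G : EuclideanSpace ℝ (Fin d) × ℝ → ℝ) (hG : ContDiff ℝ 1 G)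
    (gradG : EuclideanSpace ℝ (Fin d) → ℝ → EuclideanSpace ℝ (Fin d))
    (hgrad : ∀ x v, HasGradientAt (fun y => G (y, v)) (gradG x v) x)
    (Gv : EuclideanSpace ℝ (Fin d) → ℝ → ℝ)
    (hGv : ∀ x v, HasDerivAt (fun w => G (x, w)) (Gv x v) v)
    (hGv0 : ∀ x v, 0 ≤ Gv x v)
    (x₀ : EuclideanSpace ℝ (Fin d)) (v₀ : ℝ)
    (hpos : 0 < (inner ℝ (deriv (deriv g) v₀) (gradG x₀ v₀) : ℝ)) :
    (∃ t > (0:ℝ), ∃ x : EuclideanSpace ℝ (Fin d),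
        deriv (fun v => G (x - t • deriv g v, v)) v₀ < 0) ∧
    ∀ t : ℝ, Gv x₀ v₀ / (inner ℝ (deriv (deriv g) v₀) (gradG x₀ v₀) : ℝ) < t →
      deriv (fun v => G (x₀ + t • deriv g v₀ - t • deriv g v, v)) v₀ < 0 :=
  stmt_1_general g hg G hG gradG hgrad Gv hGv x₀ v₀ hpos
end

section
/- In one space dimension ($d=1$), let $g\in C^2(\mathbb{R})$ satisfy $g''(v)>0$ for all $v$, and let $G:\mathbb{R}\times\mathbb{R}\to\mathbb{R}$ be $C^1$ with $\partial_v G\ge 0$. Then $F(t,x,v)=G(x-g'(v)t,v)$ is non-decreasing in $v$ for all $(t,x,v)$ with $t\ge 0$ if and only if $\partial_x G(x,v)\le 0$ for all $(x,v)$. -/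
/-!
Along the characteristic `v ↦ (x - g'(v) t, v)` the chain rule gives
`∂ᵥ F = ∂ᵥ G - g''(v) t ∂ₓ G`. If `∂ₓ G ≤ 0`, both terms are non-negative. Conversely, if
`∂ₓ G(x, v) > 0`, then choosing the characteristic through `(x, v)` at a large time `t`
makes `∂ᵥ F` negative at `v`, since `g''(v) > 0`.
-/

open Real Set

theorem HasFDerivAt.hasDerivAt_comp_prodMk {E : Type*} [NormedAddCommGroup E] [NormedSpace ℝ E]
    {F : ℝ × ℝ → E} {L : ℝ × ℝ →L[ℝ] E} {a b : ℝ → ℝ} {a' b' s : ℝ}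
    (hF : HasFDerivAt F L (a s, b s)) (ha : HasDerivAt a a' s) (hb : HasDerivAt b b' s) :
    HasDerivAt (fun s => F (a s, b s)) (a' • L (1, 0) + b' • L (0, 1)) s := by
  have hab : ((a', b') : ℝ × ℝ) = a' • ((1 : ℝ), (0 : ℝ)) + b' • ((0 : ℝ), (1 : ℝ)) := by
    simp
  simpa only [hab, map_add, map_smul, Function.comp_def] using
    hF.comp_hasDerivAt s (ha.prodMk hb)

section PartialDerivatives

variable {G : ℝ → ℝ → ℝ}

theorem hasDerivAt_comp_of_differentiableAt_uncurry {a b : ℝ → ℝ} {a' b' s : ℝ}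
    (hG : DifferentiableAt ℝ (fun p : ℝ × ℝ => G p.1 p.2) (a s, b s))
    (ha : HasDerivAt a a' s) (hb : HasDerivAt b b' s) :
    HasDerivAt (fun s => G (a s) (b s))
      (a' * deriv (fun y => G y (b s)) (a s) + b' * deriv (G (a s)) (b s)) s := by
  have hL := hG.hasFDerivAt
  set L := fderiv ℝ (fun p : ℝ × ℝ => G p.1 p.2) (a s, b s)
  have h₁ : deriv (fun y => G y (b s)) (a s) = L (1, 0) := by
    simpa using (hL.hasDerivAt_comp_prodMk (a := fun y => y) (hasDerivAt_id' (a s))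
      (hasDerivAt_const (a s) (b s))).deriv
  have h₂ : deriv (G (a s)) (b s) = L (0, 1) := by
    simpa using (hL.hasDerivAt_comp_prodMk (b := fun y => y) (hasDerivAt_const (b s) (a s))
      (hasDerivAt_id' (b s))).deriv
  rw [h₁, h₂]
  exact hL.hasDerivAt_comp_prodMk ha hb

theorem hasDerivAt_along_characteristic {g : ℝ → ℝ} (hg : Differentiable ℝ (deriv g))
    (hG : Differentiable ℝ fun p : ℝ × ℝ => G p.1 p.2) (t x v : ℝ) :
    HasDerivAt (fun v => G (x - deriv g v * t) v)
      (-(deriv (deriv g) v * t) * deriv (fun y => G y v) (x - deriv g v * t)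
        + deriv (G (x - deriv g v * t)) v) v := by
  have hchar : HasDerivAt (fun v => x - deriv g v * t) (-(deriv (deriv g) v * t)) v := by
    simpa using ((hg v).hasDerivAt.mul_const t).const_sub x
  simpa using hasDerivAt_comp_of_differentiableAt_uncurry (hG _) hchar (hasDerivAt_id v)

end PartialDerivatives

theorem nonpos_of_forall_mul_le {A B : ℝ} (h : ∀ t, 0 ≤ t → t * A ≤ B) : A ≤ 0 := by
  by_contra! hA
  have := h ((|B| + 1) / A) (by positivity)
  rw [div_mul_cancel₀ _ hA.ne'] at this
  linarith [le_abs_self B]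

theorem stmt_2 (g : ℝ → ℝ) (hg : ContDiff ℝ 2 g)
    (hconv : ∀ v, 0 < deriv (deriv g) v)
    (G : ℝ → ℝ → ℝ) (hG : ContDiff ℝ 1 fun p : ℝ × ℝ => G p.1 p.2)
    (hGv : ∀ x, Monotone (G x)) :
    (∀ t : ℝ, 0 ≤ t → ∀ x : ℝ, Monotone fun v => G (x - deriv g v * t) v) ↔
      ∀ x v : ℝ, deriv (fun y => G y v) x ≤ 0 := by
  have hchar := hasDerivAt_along_characteristic hg.differentiable_deriv_two
    (hG.differentiable one_ne_zero)
  constructor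
  · intro hF x v
    have hc := hconv v
    refine nonpos_of_forall_mul_le (B := deriv (G x) v) fun s hs => ?_
    set t := s / deriv (deriv g) v
    have hthrough := hchar t (x + deriv g v * t) v
    rw [add_sub_cancel_right] at hthrough
    have hFv := hthrough.deriv ▸ (hF t (div_nonneg hs hc.le) _).deriv_nonneg
    rw [mul_div_cancel₀ _ hc.ne'] at hFv
    linarith
  · intro hGx t ht x
    refine monotone_of_deriv_nonneg (fun v => (hchar t x v).differentiableAt) fun v => ?_
    rw [(hchar t x v).deriv]
    set y := x - deriv g v * t
    have hdrift := mul_nonneg (mul_nonneg (hconv v).le ht) (neg_nonneg.2 (hGx y v))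
    linarith [(hGv y).deriv_nonneg (x := v)]
end

section
/- Let $d=1$, $g''(v)>0$ for all $v$, with either $\inf_v g''>0$ or $m\in L^1([0,\infty))$, $m=m(t)$ only. Then there exists a $C^1$ function $G(x,v)$, non-decreasing in $v$ for each $x$ and attaining values in $[0,1]$ with correct limits, and there exist $(t,x,v)$ such that $\partial_v F(t,x,v)<0$ for $F(t,x,v)=G(X(0;t,x,v),V(0;t,x,v))$; i.e., the condition '$\partial_x G\le 0$ everywhere' is necessary for global monotonicity preservation. -/
open Real Set Filter Topology MeasureTheory intervalIntegral

/-!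
Along the backward characteristics `V(0) = v - ∫₀ᵗ m` and `X(0) = x - ∫₀ᵗ g'(V(τ)) dτ`, so
`∂ᵥ X(0) = -∫₀ᵗ g''(V(τ)) dτ < 0` by strict convexity of `g`. For the initial datum
`G(x, v) = Φ(v + K x)`, with `Φ` the Cauchy distribution function and `K > 0`, the chain rule gives
`∂ᵥ F = Φ'(…) (1 + K ∂ᵥ X(0))`, which is negative once `K > 1 / |∂ᵥ X(0)|`; we take
`t = 1`, `x = v = 0` and `K = 2 / |∂ᵥ X(0)|`.
-/

noncomputable def cauchyCDF (y : ℝ) : ℝ := arctan y / π + 1 / 2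

lemma contDiff_cauchyCDF : ContDiff ℝ 1 cauchyCDF :=
  (contDiff_arctan.div_const π).add contDiff_const

lemma strictMono_cauchyCDF : StrictMono cauchyCDF := fun _ _ hab => by
  unfold cauchyCDF
  gcongr

lemma cauchyCDF_mem_Icc (y : ℝ) : cauchyCDF y ∈ Icc 0 1 := by
  have hlo := neg_pi_div_two_lt_arctan y
  have hhi := arctan_lt_pi_div_two y
  unfold cauchyCDF
  constructor
  · have : -(1 / 2) ≤ arctan y / π := by rw [le_div_iff₀ pi_pos]; linarith
    linarith
  · have : arctan y / π ≤ 1 / 2 := by rw [div_le_iff₀ pi_pos]; linarith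
    linarith

lemma tendsto_cauchyCDF_atBot : Tendsto cauchyCDF atBot (𝓝 0) := by
  have h := ((tendsto_arctan_atBot.mono_right nhdsWithin_le_nhds).div_const π).add_const (1 / 2)
  rwa [show -(π / 2) / π + 1 / 2 = 0 by field_simp; ring] at h

lemma tendsto_cauchyCDF_atTop : Tendsto cauchyCDF atTop (𝓝 1) := by
  have h := ((tendsto_arctan_atTop.mono_right nhdsWithin_le_nhds).div_const π).add_const (1 / 2)
  rwa [show π / 2 / π + 1 / 2 = 1 by field_simp; ring] at h

lemma HasDerivAt.cauchyCDF {f : ℝ → ℝ} {f' x : ℝ} (hf : HasDerivAt f f' x) :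
    HasDerivAt (fun y => cauchyCDF (f y)) (f' / (π * (1 + f x ^ 2))) x := by
  have h := (hf.arctan.div_const π).add_const (1 / 2)
  rwa [show 1 / (1 + f x ^ 2) * f' / π = f' / (π * (1 + f x ^ 2)) by field_simp] at h

lemma eq_add_integral_of_hasDerivAt {u u' : ℝ → ℝ} (hu : ∀ s, HasDerivAt u (u' s) s)
    (hu' : Continuous u') (t τ : ℝ) : u τ = u t + ∫ s in t..τ, u' s := by
  rw [integral_eq_sub_of_hasDerivAt (fun s _ => hu s) (hu'.intervalIntegrable t τ)]
  ring

lemma characteristic_eq {g' m x v : ℝ → ℝ} (hg' : Continuous g') (hm : Continuous m)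
    (hx : ∀ τ, HasDerivAt x (g' (v τ)) τ) (hv : ∀ τ, HasDerivAt v (m τ) τ) (t τ : ℝ) :
    v τ = v t + ∫ s in t..τ, m s ∧
      x τ = x t + ∫ σ in t..τ, g' (v t + ∫ s in t..σ, m s) := by
  have hv_eq : ∀ σ, v σ = v t + ∫ s in t..σ, m s := eq_add_integral_of_hasDerivAt hv hm t
  refine ⟨hv_eq τ, ?_⟩
  simp_rw [← hv_eq]
  refine eq_add_integral_of_hasDerivAt hx (hg'.comp ?_) t τ
  exact continuous_iff_continuousAt.2 fun σ => (hv σ).continuousAt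

lemma hasDerivAt_integral_comp_add {f f' c : ℝ → ℝ} (hf : ∀ y, HasDerivAt f (f' y) y)
    (hf' : Continuous f') (hc : Continuous c) (a b w : ℝ) :
    HasDerivAt (fun w => ∫ τ in a..b, f (w + c τ)) (∫ τ in a..b, f' (w + c τ)) w := by
  have hf_cont : Continuous f := continuous_iff_continuousAt.2 fun y => (hf y).continuousAt
  obtain ⟨C, hC⟩ : ∃ C, ∀ p ∈ Metric.closedBall w 1 ×ˢ uIcc a b, ‖f' (p.1 + c p.2)‖ ≤ C :=
    (isCompact_closedBall w 1).prod isCompact_uIcc |>.exists_bound_of_continuousOn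
      (hf'.comp (continuous_fst.add (hc.comp continuous_snd))).continuousOn
  refine (hasDerivAt_integral_of_dominated_loc_of_deriv_le (F := fun y τ => f (y + c τ))
    (F' := fun y τ => f' (y + c τ)) (bound := fun _ => C)
    (Metric.ball_mem_nhds w one_pos) ?_ ?_ ?_ ?_ intervalIntegrable_const ?_).2
  · exact Eventually.of_forall fun y =>
      (hf_cont.comp (continuous_const.add hc)).aestronglyMeasurable
  · exact (hf_cont.comp (continuous_const.add hc)).intervalIntegrable a b
  · exact (hf'.comp (continuous_const.add hc)).aestronglyMeasurable
  · exact Eventually.of_forall fun τ hτ y hy =>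
      hC (y, τ) ⟨Metric.ball_subset_closedBall hy, uIoc_subset_uIcc hτ⟩
  · exact Eventually.of_forall fun τ _ y _ => (hf (y + c τ)).comp_add_const y (c τ)

theorem stmt_9_general (g : ℝ → ℝ) (hg : ContDiff ℝ 2 g)
    (hconv : ∀ v, 0 < deriv (deriv g) v)
    (m : ℝ → ℝ) (hm : Continuous m)
    (X V : ℝ → ℝ → ℝ → ℝ → ℝ)  -- backward characteristics `X τ t x v`, `V τ t x v`
    (hX : ∀ t x v τ : ℝ, HasDerivAt (fun σ => X σ t x v) (deriv g (V τ t x v)) τ)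
    (hV : ∀ t x v τ : ℝ, HasDerivAt (fun σ => V σ t x v) (m τ) τ)
    (hXt : ∀ t x v : ℝ, X t t x v = x) (hVt : ∀ t x v : ℝ, V t t x v = v) :
    ∃ G : ℝ → ℝ → ℝ,
      ContDiff ℝ 1 (fun p : ℝ × ℝ => G p.1 p.2) ∧
      (∀ x, Monotone (G x)) ∧
      (∀ x v, G x v ∈ Set.Icc (0 : ℝ) 1) ∧
      (∀ x, Filter.Tendsto (G x) Filter.atBot (nhds 0)) ∧
      (∀ x, Filter.Tendsto (G x) Filter.atTop (nhds 1)) ∧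
      ∃ t > (0 : ℝ), ∃ x v : ℝ,
        deriv (fun w => G (X 0 t x w) (V 0 t x w)) v < 0 := by
  have hg'_cont : Continuous (deriv g) := hg.continuous_deriv (by norm_num)
  have hg''_cont : Continuous (deriv (deriv g)) := by
    simpa [iteratedDeriv_eq_iterate] using hg.continuous_iteratedDeriv 2 le_rfl
  have hg'' : ∀ y, HasDerivAt (deriv g) (deriv (deriv g) y) y := fun y => by
    simpa using ((hg.differentiable_iteratedDeriv 1 (by norm_num)) y).hasDerivAt
  set c : ℝ → ℝ := fun τ => ∫ s in (1 : ℝ)..τ, m s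
  have hc : Continuous c := continuous_primitive (fun a b => hm.intervalIntegrable a b) 1
  have hchar : ∀ w, V 0 1 0 w = w + c 0 ∧ X 0 1 0 w = ∫ σ in (1 : ℝ)..0, deriv g (w + c σ) := by
    intro w
    simpa [hVt, hXt] using characteristic_eq hg'_cont hm (hX 1 0 w) (hV 1 0 w) 1 0
  set A := ∫ σ in (0 : ℝ)..1, deriv (deriv g) (c σ)
  have hA : 0 < A := intervalIntegral_pos_of_pos_on
    ((hg''_cont.comp hc).intervalIntegrable 0 1) (fun σ _ => hconv (c σ)) one_pos
  have hV' : HasDerivAt (fun w => V 0 1 0 w) 1 0 := by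
    rw [funext fun w => (hchar w).1]
    exact (hasDerivAt_id' 0).add_const (c 0)
  have hX' : HasDerivAt (fun w => X 0 1 0 w) (-A) 0 := by
    rw [funext fun w => (hchar w).2, ← integral_symm]
    simpa only [zero_add] using hasDerivAt_integral_comp_add hg'' hg''_cont hc 1 0 0
  refine ⟨fun x v => cauchyCDF (v + 2 / A * x), ?_, fun x => ?_, fun x v => cauchyCDF_mem_Icc _,
    fun x => ?_, fun x => ?_, 1, one_pos, 0, 0, ?_⟩
  · exact contDiff_cauchyCDF.comp (contDiff_snd.add (contDiff_const.mul contDiff_fst))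
  · exact strictMono_cauchyCDF.monotone.comp (monotone_id.add_const _)
  · exact tendsto_cauchyCDF_atBot.comp (tendsto_atBot_add_const_right _ _ tendsto_id)
  · exact tendsto_cauchyCDF_atTop.comp (tendsto_atTop_add_const_right _ _ tendsto_id)
  · have hF : HasDerivAt (fun w => cauchyCDF (V 0 1 0 w + 2 / A * X 0 1 0 w)) _ 0 :=
      (hV'.add (hX'.const_mul (2 / A))).cauchyCDF
    rw [hF.deriv]
    refine div_neg_of_neg_of_pos ?_ (by positivity)
    field_simp
    norm_num

theorem stmt_9 (g : ℝ → ℝ) (hg : ContDiff ℝ 2 g)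
    (hconv : ∀ v, 0 < deriv (deriv g) v)
    (m : ℝ → ℝ) (hm : Continuous m)
    (hcase : (∃ c > (0 : ℝ), ∀ v, c ≤ deriv (deriv g) v) ∨
      MeasureTheory.IntegrableOn m (Set.Ici 0))
    (X V : ℝ → ℝ → ℝ → ℝ → ℝ)  -- backward characteristics `X τ t x v`, `V τ t x v`
    (hX : ∀ t x v τ : ℝ, HasDerivAt (fun σ => X σ t x v) (deriv g (V τ t x v)) τ)
    (hV : ∀ t x v τ : ℝ, HasDerivAt (fun σ => V σ t x v) (m τ) τ)
    (hXt : ∀ t x v : ℝ, X t t x v = x) (hVt : ∀ t x v : ℝ, V t t x v = v) :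
    ∃ G : ℝ → ℝ → ℝ,
      ContDiff ℝ 1 (fun p : ℝ × ℝ => G p.1 p.2) ∧
      (∀ x, Monotone (G x)) ∧
      (∀ x v, G x v ∈ Set.Icc (0 : ℝ) 1) ∧
      (∀ x, Filter.Tendsto (G x) Filter.atBot (nhds 0)) ∧
      (∀ x, Filter.Tendsto (G x) Filter.atTop (nhds 1)) ∧
      ∃ t > (0 : ℝ), ∃ x v : ℝ,
        deriv (fun w => G (X 0 t x w) (V 0 t x w)) v < 0 :=
  stmt_9_general g hg hconv m hm X V hX hV hXt hVt
end

section
/- Under the assumptions of the previous statement, if additionally $\lambda:=\inf_{x\in\mathbb{T}^d}\partial_\xi u_0(x,\xi)>0$ for a fixed $\xi$, then there is a constant $K=K(\xi,T)$ such that $\partial_\xi u(t,x,\xi)\ge \lambda e^{-Kt}$ for all $(t,x)\in(0,T]\times\mathbb{T}^d$. -/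
open Real Set
open scoped ContDiff

section aux
variable {X : Type*} [NormedAddCommGroup X] [NormedSpace ℝ X]

noncomputable def dd' (v : X) (F : X → ℝ) : X → ℝ := fun p => fderiv ℝ F p v

lemma contDiff_dd' {F : X → ℝ} (hF : ContDiff ℝ ∞ F) (v : X) :
    ContDiff ℝ ∞ (dd' v F) :=
  (hF.fderiv_right (by simp)).clm_apply contDiff_const

lemma dd'_comm {F : X → ℝ} (hF : ContDiff ℝ ∞ F) (v w : X) (p : X) :
    dd' w (dd' v F) p = dd' v (dd' w F) p := by
  have h0 : ContDiff ℝ ∞ (fderiv ℝ F) := hF.fderiv_right (by simp)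
  have h1 : DifferentiableAt ℝ (fderiv ℝ F) p :=
    (h0.differentiable (by norm_cast)).differentiableAt
  have hsymm : IsSymmSndFDerivAt ℝ F p :=
    (hF.contDiffAt).isSymmSndFDerivAt (by rw [minSmoothness_of_isRCLikeNormedField]; norm_cast)
  have e : ∀ a : X, fderiv ℝ (fun q => fderiv ℝ F q a) p =
      (fderiv ℝ (fderiv ℝ F) p).flip a := by
    intro a
    have := fderiv_clm_apply (c := fderiv ℝ F) (u := fun _ => a) h1 (differentiableAt_const a)
    simpa using this
  show fderiv ℝ (fun q => fderiv ℝ F q v) p w = fderiv ℝ (fun q => fderiv ℝ F q w) p v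
  rw [e v, e w]
  exact hsymm w v

lemma hasDerivAt_line {F : X → ℝ} (hF : Differentiable ℝ F) (p v : X) (s : ℝ) :
    HasDerivAt (fun r => F (p + r • v)) (dd' v F (p + s • v)) s := by
  have hγ : HasDerivAt (fun r : ℝ => p + r • v) v s := by
    simpa using ((hasDerivAt_id s).smul_const v).const_add p
  simpa [dd', Function.comp_def] using ((hF (p + s • v)).hasFDerivAt.comp_hasDerivAt s hγ)

lemma deriv_line {F : X → ℝ} (hF : Differentiable ℝ F) (p v : X) (s : ℝ) :
    deriv (fun r => F (p + r • v)) s = dd' v F (p + s • v) :=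
  (hasDerivAt_line hF p v s).deriv

lemma second_deriv_nonneg_of_min {f : ℝ → ℝ} (hf : ContDiff ℝ ∞ f)
    (hmin : ∀ s : ℝ, f 0 ≤ f s) : 0 ≤ deriv (deriv f) 0 := by
  by_contra hcon
  push_neg at hcon
  have hdf : deriv f = dd' (1:ℝ) f := by funext x; rfl
  have h1 : ContDiff ℝ ∞ (deriv f) := by
    rw [hdf]; exact (hf.fderiv_right (by simp)).clm_apply contDiff_const
  have h2 : ContDiff ℝ ∞ (deriv (deriv f)) := by
    rw [show deriv (deriv f) = dd' (1:ℝ) (deriv f) from funext fun x => rfl]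
    exact (h1.fderiv_right (by simp)).clm_apply contDiff_const
  have hev : ∀ᶠ s in nhds (0:ℝ), deriv (deriv f) s < 0 :=
    h2.continuous.continuousAt.eventually_lt continuousAt_const hcon
  obtain ⟨δ, hδ, hball⟩ := Metric.eventually_nhds_iff.1 hev
  set c := δ/2 with hc
  have hc0 : 0 < c := by positivity
  have hderivneg : ∀ x ∈ Ioo (0:ℝ) c, deriv (deriv f) x < 0 := by
    intro x hx
    apply hball
    simp only [dist_zero_right, Real.norm_eq_abs, abs_of_pos hx.1]
    linarith [hx.2]
  have hanti : StrictAntiOn (deriv f) (Icc 0 c) := by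
    apply strictAntiOn_of_deriv_neg (convex_Icc 0 c) (h1.continuous.continuousOn)
    intro x hx
    exact hderivneg x (by rwa [interior_Icc] at hx)
  have hd0 : deriv f 0 = 0 := by
    have : IsLocalMin f 0 := Filter.Eventually.of_forall hmin
    exact this.deriv_eq_zero
  have hderivneg' : ∀ x ∈ Ioo (0:ℝ) c, deriv f x < 0 := by
    intro x hx
    have := hanti (left_mem_Icc.2 hc0.le) ⟨hx.1.le, hx.2.le⟩ hx.1
    rwa [hd0] at this
  have hanti2 : StrictAntiOn f (Icc 0 c) := by
    apply strictAntiOn_of_deriv_neg (convex_Icc 0 c) (hf.continuous.continuousOn)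
    intro x hx
    exact hderivneg' x (by rwa [interior_Icc] at hx)
  have := hanti2 (left_mem_Icc.2 hc0.le) (right_mem_Icc.2 hc0.le) hc0
  exact absurd (hmin c) (by linarith)

lemma deriv_nonpos_of_right_min {f : ℝ → ℝ} {f' t : ℝ} (hd : HasDerivAt f f' t)
    (ht : 0 < t) (hmin : ∀ s ∈ Icc (0:ℝ) t, f t ≤ f s) : f' ≤ 0 := by
  have hslope : Filter.Tendsto (slope f t) (nhdsWithin t {t}ᶜ) (nhds f') :=
    hasDerivAt_iff_tendsto_slope.1 hd
  have h1 : Filter.Tendsto (slope f t) (nhdsWithin t (Iio t)) (nhds f') :=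
    hslope.mono_left (nhdsWithin_mono _ (fun s hs => ne_of_lt hs))
  have hmem : Ioo (0:ℝ) t ∈ nhdsWithin t (Iio t) :=
    Filter.inter_mem (mem_nhdsWithin_of_mem_nhds (Ioi_mem_nhds ht)) self_mem_nhdsWithin
  refine le_of_tendsto h1 ?_
  filter_upwards [hmem] with s hs
  rw [slope_def_field]
  apply div_nonpos_of_nonneg_of_nonpos
  · have := hmin s ⟨hs.1.le, hs.2.le⟩; linarith
  · linarith [hs.2]

lemma min_line_facts {F : X → ℝ} (hF : ContDiff ℝ ∞ F) (p v : X)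
    (hmin : ∀ s : ℝ, F p ≤ F (p + s • v)) :
    dd' v F p = 0 ∧ 0 ≤ dd' v (dd' v F) p := by
  set φ := fun s : ℝ => F (p + s • v) with hφdef
  have hφ : ContDiff ℝ ∞ φ :=
    hF.comp (contDiff_const.add (contDiff_id.smul contDiff_const))
  have hd : ∀ s, HasDerivAt φ (dd' v F (p + s • v)) s := fun s =>
    hasDerivAt_line (hF.differentiable (by norm_cast)) p v s
  have hp0 : p + (0:ℝ) • v = p := by simp
  have hmin0 : ∀ s : ℝ, φ 0 ≤ φ s := by
    intro s; simpa only [hφdef, hp0] using hmin s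
  constructor
  · have hloc : IsLocalMin φ 0 := Filter.Eventually.of_forall hmin0
    have := hloc.deriv_eq_zero
    rw [(hd 0).deriv] at this
    rwa [hp0] at this
  · have h2 := second_deriv_nonneg_of_min hφ hmin0
    have hdφ : deriv φ = fun s => dd' v F (p + s • v) := funext fun s => (hd s).deriv
    rw [hdφ] at h2
    have hG : Differentiable ℝ (dd' v F) := (contDiff_dd' hF v).differentiable (by norm_cast)
    have := deriv_line hG p v 0
    rw [this] at h2
    rwa [hp0] at h2

lemma hasDerivAt_sliceT {F : ℝ × X × ℝ → ℝ} (hF : Differentiable ℝ F) (t : ℝ) (x : X) (z : ℝ) :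
    HasDerivAt (fun s => F (s, x, z)) (dd' ((1:ℝ),(0:X),(0:ℝ)) F (t,x,z)) t := by
  have h := hasDerivAt_line (X := ℝ × X × ℝ) hF (0, x, z) (1,0,0) t
  have e1 : ∀ s : ℝ, ((0:ℝ), x, z) + s • ((1:ℝ),(0:X),(0:ℝ)) = (s, x, z) := by
    intro s; simp [Prod.ext_iff]
  simp only [e1] at h
  exact h

lemma hasDerivAt_sliceXi {F : ℝ × X × ℝ → ℝ} (hF : Differentiable ℝ F) (t : ℝ) (x : X) (z : ℝ) :
    HasDerivAt (fun w => F (t, x, w)) (dd' ((0:ℝ),(0:X),(1:ℝ)) F (t,x,z)) z := by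
  have h := hasDerivAt_line (X := ℝ × X × ℝ) hF (t, x, 0) (0,0,1) z
  have e1 : ∀ w : ℝ, ((t:ℝ), x, (0:ℝ)) + w • ((0:ℝ),(0:X),(1:ℝ)) = (t, x, w) := by
    intro w; simp [Prod.ext_iff]
  simp only [e1] at h
  exact h

lemma fderiv_sliceX {F : ℝ × X × ℝ → ℝ} (hF : Differentiable ℝ F) (t z : ℝ) (x a : X) :
    fderiv ℝ (fun y => F (t,y,z)) x a = fderiv ℝ F (t,x,z) (0,a,0) := by
  have hι : HasFDerivAt (fun y : X => ((t,y,z) : ℝ × X × ℝ))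
      ((0 : X →L[ℝ] ℝ).prod ((ContinuousLinearMap.id ℝ X).prod (0 : X →L[ℝ] ℝ))) x :=
    HasFDerivAt.prodMk (hasFDerivAt_const t x) (HasFDerivAt.prodMk (hasFDerivAt_id x) (hasFDerivAt_const z x))
  have h := ((hF ((t,x,z) : ℝ × X × ℝ)).hasFDerivAt.comp x hι).fderiv
  rw [show (fun y => F (t,y,z)) = F ∘ (fun y : X => ((t,y,z) : ℝ × X × ℝ)) from rfl, h]
  rfl

lemma dd'_translate {F : X → ℝ} (hF : Differentiable ℝ F) (c : X)
    (hper : ∀ q, F (q + c) = F q) (p v : X) : dd' v F (p + c) = dd' v F p := by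
  have hfun : (fun q => F (q + c)) = F := funext hper
  have h : HasFDerivAt (fun q => F (q + c)) (fderiv ℝ F (p + c)) p := by
    have h2 := (hF (p + c)).hasFDerivAt.comp p ((hasFDerivAt_id p).add_const c)
    simpa [Function.comp_def] using h2
  rw [hfun] at h
  simp only [dd']
  rw [h.fderiv]

end aux

/-- The Laplacian of `f : ℝ^d → ℝ`, as the trace of the second derivative. -/
noncomputable def lapl {d : ℕ} (f : EuclideanSpace ℝ (Fin d) → ℝ)
    (x : EuclideanSpace ℝ (Fin d)) : ℝ :=
  ∑ i : Fin d,
    iteratedFDeriv ℝ 2 f x ![EuclideanSpace.single i 1, EuclideanSpace.single i 1]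

set_option maxHeartbeats 2000000 in
theorem stmt_11 {d : ℕ} (T ε : ℝ) (hT : 0 < T) (hε : 0 < ε)
    (g : ℝ → EuclideanSpace ℝ (Fin d)) (hg : ContDiff ℝ (⊤ : ℕ∞) g)
    (u : ℝ → EuclideanSpace ℝ (Fin d) → ℝ → ℝ)
    (hu : ContDiff ℝ (⊤ : ℕ∞) fun p : ℝ × EuclideanSpace ℝ (Fin d) × ℝ => u p.1 p.2.1 p.2.2)
    (hper : ∀ (t : ℝ) (x : EuclideanSpace ℝ (Fin d)) (ξ : ℝ) (i : Fin d),
      u t (x + (2 * Real.pi) • EuclideanSpace.single i 1) ξ = u t x ξ)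
    (hpde : ∀ t ∈ Set.Ioc (0 : ℝ) T, ∀ (x : EuclideanSpace ℝ (Fin d)) (ξ : ℝ),
      deriv (fun s => u s x ξ) t +
          (inner ℝ (deriv g (u t x ξ)) (gradient (fun y => u t y ξ) x) : ℝ)
        = ε * lapl (fun y => u t y ξ) x)
    (hinit : ∀ (x : EuclideanSpace ℝ (Fin d)) (ξ : ℝ), 0 ≤ deriv (fun z => u 0 x z) ξ)
    (hnz : ∃ (x : EuclideanSpace ℝ (Fin d)) (ξ : ℝ), deriv (fun z => u 0 x z) ξ ≠ 0)
    (ξ : ℝ) (lam : ℝ) (hlam : 0 < lam)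
    (hlow : ∀ x : EuclideanSpace ℝ (Fin d), lam ≤ deriv (fun z => u 0 x z) ξ) :
    ∃ K : ℝ, ∀ t ∈ Set.Ioc (0 : ℝ) T, ∀ x : EuclideanSpace ℝ (Fin d),
      lam * Real.exp (-K * t) ≤ deriv (fun z => u t x z) ξ := by
  classical
  set U : (ℝ × EuclideanSpace ℝ (Fin d) × ℝ) → ℝ := fun p => u p.1 p.2.1 p.2.2 with hUdef
  have hUs : ContDiff ℝ ∞ U := hu.of_le (by simp)
  have hUdiff : Differentiable ℝ U := hUs.differentiable (by norm_cast)
  set et : (ℝ × EuclideanSpace ℝ (Fin d) × ℝ) := ((1:ℝ), (0:(EuclideanSpace ℝ (Fin d))), (0:ℝ)) with het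
  set exv : Fin d → (ℝ × EuclideanSpace ℝ (Fin d) × ℝ) := fun i => ((0:ℝ), EuclideanSpace.single i 1, (0:ℝ)) with hexv
  set eξv : (ℝ × EuclideanSpace ℝ (Fin d) × ℝ) := ((0:ℝ), (0:(EuclideanSpace ℝ (Fin d))), (1:ℝ)) with heξv
  set W : (ℝ × EuclideanSpace ℝ (Fin d) × ℝ) → ℝ := dd' eξv U with hWdef
  have hWs : ContDiff ℝ ∞ W := contDiff_dd' hUs eξv
  have hWdiff : Differentiable ℝ W := hWs.differentiable (by norm_cast)
  -- W is the ξ-derivative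
  have hW4 : ∀ (t : ℝ) (x : (EuclideanSpace ℝ (Fin d))) (z : ℝ), W (t, x, z) = deriv (fun w => u t x w) z := by
    intro t x z
    exact ((hasDerivAt_sliceXi (X := (EuclideanSpace ℝ (Fin d))) hUdiff t x z).deriv).symm
  set ai : Fin d → ℝ → ℝ := fun i r => deriv g r i with hai
  have hgs : ContDiff ℝ ∞ g := hg.of_le (by simp)
  have hgderiv : ContDiff ℝ ∞ (deriv g) := by
    rw [show deriv g = fun r => fderiv ℝ g r 1 from funext fun r => rfl]
    exact (hgs.fderiv_right (by simp)).clm_apply contDiff_const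
  have hais : ∀ i, ContDiff ℝ ∞ (ai i) := by
    intro i
    rw [show ai i = fun r => (EuclideanSpace.proj i : EuclideanSpace ℝ (Fin d) →L[ℝ] ℝ) (deriv g r)
      from funext fun r => rfl]
    exact (EuclideanSpace.proj i).contDiff.comp hgderiv
  set cf : (ℝ × EuclideanSpace ℝ (Fin d) × ℝ) → ℝ := fun p => ∑ i, deriv (ai i) (U p) * dd' (exv i) U p with hcf
  have hcfcont : Continuous cf := by
    apply continuous_finset_sum
    intro i _
    have h1 : Continuous (deriv (ai i)) := by
      rw [show deriv (ai i) = fun r => fderiv ℝ (ai i) r 1 from funext fun r => rfl]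
      have h2 : ContDiff ℝ ∞ (fun r => fderiv ℝ (ai i) r 1) :=
        ((hais i).fderiv_right (by simp)).clm_apply contDiff_const
      exact h2.continuous
    exact (h1.comp hUs.continuous).mul (contDiff_dd' hUs (exv i)).continuous
  have hinner : ∀ (f : (EuclideanSpace ℝ (Fin d)) → ℝ) (x a : (EuclideanSpace ℝ (Fin d))), (inner ℝ a (gradient f x) : ℝ) = fderiv ℝ f x a := by
    intro f x a
    rw [real_inner_comm, gradient, InnerProductSpace.toDual_symm_apply]
  have hadecomp : ∀ a : (EuclideanSpace ℝ (Fin d)), a = ∑ i, a i • EuclideanSpace.single i 1 := by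
    intro a
    ext j
    rw [WithLp.ofLp_sum, Finset.sum_apply]
    simp [EuclideanSpace.single_apply]
  have hxdecomp : ∀ a : (EuclideanSpace ℝ (Fin d)), (((0:ℝ), a, (0:ℝ)) : (ℝ × EuclideanSpace ℝ (Fin d) × ℝ)) = ∑ i, a i • exv i := by
    intro a
    have h1 := hadecomp a
    apply Prod.ext
    · simp [Prod.fst_sum, hexv]
    · apply Prod.ext
      · rw [Prod.snd_sum, Prod.fst_sum]
        simpa [hexv] using h1
      · simp [Prod.snd_sum, hexv]
  -- translated PDE
  have htrans : ∀ t ∈ Set.Ioc (0:ℝ) T, ∀ (x : (EuclideanSpace ℝ (Fin d))) (z : ℝ),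
      dd' et U (t,x,z) + ∑ i, ai i (U (t,x,z)) * dd' (exv i) U (t,x,z)
        = ε * ∑ i, dd' (exv i) (dd' (exv i) U) (t,x,z) := by
    intro t ht x z
    have h0 := hpde t ht x z
    have e1 : deriv (fun s => u s x z) t = dd' et U (t,x,z) :=
      (hasDerivAt_sliceT (X := EuclideanSpace ℝ (Fin d)) hUdiff t x z).deriv
    have e2 : (inner ℝ (deriv g (u t x z)) (gradient (fun y => u t y z) x) : ℝ)
        = ∑ i, ai i (U (t,x,z)) * dd' (exv i) U (t,x,z) := by
      rw [hinner]
      have e2a : fderiv ℝ (fun y => u t y z) x (deriv g (u t x z))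
          = fderiv ℝ U (t,x,z) (((0:ℝ), deriv g (u t x z), (0:ℝ)) : (ℝ × EuclideanSpace ℝ (Fin d) × ℝ)) :=
        fderiv_sliceX hUdiff t z x _
      rw [e2a, hxdecomp, map_sum]
      refine Finset.sum_congr rfl fun i _ => ?_
      rw [map_smul]
      simp only [smul_eq_mul]
      rfl
    have e3 : lapl (fun y => u t y z) x = ∑ i, dd' (exv i) (dd' (exv i) U) (t,x,z) := by
      unfold lapl
      refine Finset.sum_congr rfl fun i _ => ?_
      show iteratedFDeriv ℝ 2 (fun y => U (t,y,z)) x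
        ![EuclideanSpace.single i 1, EuclideanSpace.single i 1] = _
      set v : EuclideanSpace ℝ (Fin d) := EuclideanSpace.single i (1:ℝ) with hv
      have hf : ContDiff ℝ ∞ (fun y => U (t,y,z)) :=
        hUs.comp (contDiff_const.prodMk (contDiff_id.prodMk contDiff_const))
      rw [iteratedFDeriv_two_apply]
      simp only [Matrix.cons_val_zero, Matrix.cons_val_one, Matrix.head_cons]
      have hf1 : ContDiff ℝ ∞ (fderiv ℝ (fun y => U (t,y,z))) := hf.fderiv_right (by simp)
      have hdf : DifferentiableAt ℝ (fderiv ℝ (fun y => U (t,y,z))) x :=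
        (hf1.differentiable (by norm_cast)).differentiableAt
      have efl : fderiv ℝ (fun y => fderiv ℝ (fun y' => U (t,y',z)) y v) x
          = (fderiv ℝ (fderiv ℝ (fun y' => U (t,y',z))) x).flip v := by
        have := fderiv_clm_apply (c := fderiv ℝ (fun y' => U (t,y',z)))
          (u := fun _ => v) hdf (differentiableAt_const v)
        simpa using this
      have goal1 : fderiv ℝ (fderiv ℝ (fun y' => U (t,y',z))) x v v
          = fderiv ℝ (fun y => fderiv ℝ (fun y' => U (t,y',z)) y v) x v := by
        rw [efl]; rfl
      rw [goal1]
      have efun : (fun y => fderiv ℝ (fun y' => U (t,y',z)) y v)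
          = fun y => dd' (((0:ℝ), v, (0:ℝ)) : (ℝ × EuclideanSpace ℝ (Fin d) × ℝ)) U (t,y,z) :=
        funext fun y => fderiv_sliceX hUdiff t z y v
      rw [efun]
      have efin := fderiv_sliceX (F := dd' (((0:ℝ),v,(0:ℝ)) : (ℝ × EuclideanSpace ℝ (Fin d) × ℝ)) U)
        ((contDiff_dd' hUs _).differentiable (by norm_cast)) t z x v
      rw [efin]
      rfl
    rw [e1, e2, e3] at h0
    exact h0
  -- PDE for W
  have hWpde : ∀ t ∈ Set.Ioc (0:ℝ) T, ∀ x : (EuclideanSpace ℝ (Fin d)),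
      dd' et W (t,x,ξ) + ∑ i, ai i (U (t,x,ξ)) * dd' (exv i) W (t,x,ξ)
        + cf (t,x,ξ) * W (t,x,ξ)
        = ε * ∑ i, dd' (exv i) (dd' (exv i) W) (t,x,ξ) := by
    intro t ht x
    have hA1 : HasDerivAt (fun z => dd' et U (t,x,z)) (dd' eξv (dd' et U) (t,x,ξ)) ξ :=
      hasDerivAt_sliceXi ((contDiff_dd' hUs et).differentiable (by norm_cast)) t x ξ
    have hUz : HasDerivAt (fun z => U (t,x,z)) (W (t,x,ξ)) ξ := hasDerivAt_sliceXi hUdiff t x ξ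
    have hA2 : ∀ i : Fin d,
        HasDerivAt (fun z => ai i (U (t,x,z)) * dd' (exv i) U (t,x,z))
        (deriv (ai i) (U (t,x,ξ)) * W (t,x,ξ) * dd' (exv i) U (t,x,ξ)
          + ai i (U (t,x,ξ)) * dd' eξv (dd' (exv i) U) (t,x,ξ)) ξ := by
      intro i
      have houter : HasDerivAt (ai i) (deriv (ai i) (U (t,x,ξ))) (U (t,x,ξ)) :=
        (((hais i).differentiable (by norm_cast)) (U (t,x,ξ))).hasDerivAt
      have hcomp : HasDerivAt (fun z => ai i (U (t,x,z)))
          (deriv (ai i) (U (t,x,ξ)) * W (t,x,ξ)) ξ := houter.comp ξ hUz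
      have hB : HasDerivAt (fun z => dd' (exv i) U (t,x,z))
          (dd' eξv (dd' (exv i) U) (t,x,ξ)) ξ :=
        hasDerivAt_sliceXi ((contDiff_dd' hUs (exv i)).differentiable (by norm_cast)) t x ξ
      exact hcomp.mul hB
    have hLHS : HasDerivAt
        (fun z => dd' et U (t,x,z) + ∑ i, ai i (U (t,x,z)) * dd' (exv i) U (t,x,z))
        (dd' eξv (dd' et U) (t,x,ξ) + ∑ i, (deriv (ai i) (U (t,x,ξ)) * W (t,x,ξ) * dd' (exv i) U (t,x,ξ)
          + ai i (U (t,x,ξ)) * dd' eξv (dd' (exv i) U) (t,x,ξ))) ξ :=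
      hA1.add (HasDerivAt.fun_sum fun i _ => hA2 i)
    have hRHS : HasDerivAt (fun z => ε * ∑ i, dd' (exv i) (dd' (exv i) U) (t,x,z))
        (ε * ∑ i, dd' eξv (dd' (exv i) (dd' (exv i) U)) (t,x,ξ)) ξ := by
      have hsum := HasDerivAt.fun_sum (fun (i : Fin d) (_ : i ∈ Finset.univ) =>
        hasDerivAt_sliceXi
          ((contDiff_dd' (contDiff_dd' hUs (exv i)) (exv i)).differentiable (by norm_cast)) t x ξ)
      exact hsum.const_mul ε
    have hfunEq : (fun z => dd' et U (t,x,z) + ∑ i, ai i (U (t,x,z)) * dd' (exv i) U (t,x,z))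
        = (fun z => ε * ∑ i, dd' (exv i) (dd' (exv i) U) (t,x,z)) :=
      funext fun z => htrans t ht x z
    rw [hfunEq] at hLHS
    have heq := hLHS.unique hRHS
    have c1 : dd' eξv (dd' et U) (t,x,ξ) = dd' et W (t,x,ξ) := dd'_comm hUs et eξv (t,x,ξ)
    have c2 : ∀ i : Fin d, dd' eξv (dd' (exv i) U) (t,x,ξ) = dd' (exv i) W (t,x,ξ) :=
      fun i => dd'_comm hUs (exv i) eξv (t,x,ξ)
    have c3 : ∀ i : Fin d, dd' eξv (dd' (exv i) (dd' (exv i) U)) (t,x,ξ)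
        = dd' (exv i) (dd' (exv i) W) (t,x,ξ) := by
      intro i
      have h1 := dd'_comm (contDiff_dd' hUs (exv i)) (exv i) eξv (t,x,ξ)
      have h2 : dd' eξv (dd' (exv i) U) = dd' (exv i) W :=
        funext fun q => dd'_comm hUs (exv i) eξv q
      rw [h1, h2]
    rw [c1] at heq
    have hLsum : ∑ i : Fin d, (deriv (ai i) (U (t,x,ξ)) * W (t,x,ξ) * dd' (exv i) U (t,x,ξ)
          + ai i (U (t,x,ξ)) * dd' eξv (dd' (exv i) U) (t,x,ξ))
        = ∑ i : Fin d, (deriv (ai i) (U (t,x,ξ)) * W (t,x,ξ) * dd' (exv i) U (t,x,ξ)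
          + ai i (U (t,x,ξ)) * dd' (exv i) W (t,x,ξ)) :=
      Finset.sum_congr rfl fun i _ => by rw [c2 i]
    have hRsum : ∑ i : Fin d, dd' eξv (dd' (exv i) (dd' (exv i) U)) (t,x,ξ)
        = ∑ i : Fin d, dd' (exv i) (dd' (exv i) W) (t,x,ξ) :=
      Finset.sum_congr rfl fun i _ => c3 i
    rw [hLsum, hRsum] at heq
    have hsplit : ∑ i : Fin d, (deriv (ai i) (U (t,x,ξ)) * W (t,x,ξ) * dd' (exv i) U (t,x,ξ)
          + ai i (U (t,x,ξ)) * dd' (exv i) W (t,x,ξ))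
        = (∑ i : Fin d, deriv (ai i) (U (t,x,ξ)) * W (t,x,ξ) * dd' (exv i) U (t,x,ξ))
          + ∑ i : Fin d, ai i (U (t,x,ξ)) * dd' (exv i) W (t,x,ξ) := Finset.sum_add_distrib
    have hAsum : ∑ i : Fin d, deriv (ai i) (U (t,x,ξ)) * W (t,x,ξ) * dd' (exv i) U (t,x,ξ)
        = cf (t,x,ξ) * W (t,x,ξ) := by
      simp only [hcf]
      rw [Finset.sum_mul]
      exact Finset.sum_congr rfl fun i _ => by ring
    rw [hsplit, hAsum] at heq
    linarith [heq]
  -- periodicity of W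
  have hperZ : ∀ (i : Fin d) (n : ℤ) (t : ℝ) (x : (EuclideanSpace ℝ (Fin d))) (z : ℝ),
      u t (x + ((2*Real.pi)*(n:ℝ)) • EuclideanSpace.single i 1) z = u t x z := by
    intro i n
    induction n using Int.induction_on with
    | zero => intro t x z; simp
    | succ n ih =>
      intro t x z
      have e : ((2*Real.pi)*(((n:ℤ)+1 : ℤ):ℝ)) • EuclideanSpace.single i (1:ℝ)
          = ((2*Real.pi)*((n:ℤ):ℝ)) • EuclideanSpace.single i (1:ℝ)
            + (2*Real.pi) • EuclideanSpace.single i (1:ℝ) := by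
        rw [← add_smul]
        congr 1
        push_cast
        ring
      rw [e, ← add_assoc, hper, ih]
    | pred n ih =>
      intro t x z
      have e : (x + ((2*Real.pi)*((-(n:ℤ)-1 : ℤ):ℝ)) • EuclideanSpace.single i (1:ℝ))
            + (2*Real.pi) • EuclideanSpace.single i (1:ℝ)
          = x + ((2*Real.pi)*((-(n:ℤ) : ℤ):ℝ)) • EuclideanSpace.single i (1:ℝ) := by
        rw [add_assoc, ← add_smul]
        congr 2
        push_cast
        ring
      calc u t (x + ((2*Real.pi)*((-(n:ℤ)-1 : ℤ):ℝ)) • EuclideanSpace.single i 1) z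
          = u t ((x + ((2*Real.pi)*((-(n:ℤ)-1 : ℤ):ℝ)) • EuclideanSpace.single i 1)
              + (2*Real.pi) • EuclideanSpace.single i 1) z := (hper t _ z i).symm
        _ = u t (x + ((2*Real.pi)*((-(n:ℤ) : ℤ):ℝ)) • EuclideanSpace.single i 1) z := by rw [e]
        _ = u t x z := ih t x z
  have hperV : ∀ (s : Finset (Fin d)) (m : Fin d → ℤ) (t : ℝ) (x : (EuclideanSpace ℝ (Fin d))) (z : ℝ),
      u t (x + ∑ i ∈ s, ((2*Real.pi)*(m i : ℝ)) • EuclideanSpace.single i 1) z = u t x z := by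
    intro s
    induction s using Finset.induction_on with
    | empty => intro m t x z; simp
    | insert a s2 hns ih =>
      intro m t x z
      rw [Finset.sum_insert hns]
      have e : x + (((2*Real.pi)*(m a : ℝ)) • EuclideanSpace.single a (1:ℝ)
            + ∑ i ∈ s2, ((2*Real.pi)*(m i : ℝ)) • EuclideanSpace.single i 1)
          = (x + ∑ i ∈ s2, ((2*Real.pi)*(m i : ℝ)) • EuclideanSpace.single i 1)
            + ((2*Real.pi)*(m a : ℝ)) • EuclideanSpace.single a (1:ℝ) := by
        rw [add_comm (((2*Real.pi)*(m a : ℝ)) • EuclideanSpace.single a (1:ℝ)), ← add_assoc]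
      rw [e, hperZ a (m a), ih m t x z]
  have hUperiodic : ∀ (m : Fin d → ℤ) (q : (ℝ × EuclideanSpace ℝ (Fin d) × ℝ)),
      U (q + (((0:ℝ), ∑ i, ((2*Real.pi)*(m i : ℝ)) • EuclideanSpace.single i 1, (0:ℝ)) : (ℝ × EuclideanSpace ℝ (Fin d) × ℝ))) = U q := by
    intro m q
    show u (q.1 + 0) (q.2.1 + ∑ i, ((2*Real.pi)*(m i : ℝ)) • EuclideanSpace.single i 1) (q.2.2 + 0)
      = u q.1 q.2.1 q.2.2
    rw [add_zero, add_zero]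
    exact hperV Finset.univ m _ _ _
  have hWper : ∀ (m : Fin d → ℤ) (p : (ℝ × EuclideanSpace ℝ (Fin d) × ℝ)),
      W (p + (((0:ℝ), ∑ i, ((2*Real.pi)*(m i : ℝ)) • EuclideanSpace.single i 1, (0:ℝ)) : (ℝ × EuclideanSpace ℝ (Fin d) × ℝ))) = W p := by
    intro m p
    exact dd'_translate hUdiff _ (hUperiodic m) p eξv
  -- reduction to a ball
  set R : ℝ := 2*Real.pi*(d+1) with hR
  have h2pi : (0:ℝ) < 2*Real.pi := by positivity
  have hreduce : ∀ x : (EuclideanSpace ℝ (Fin d)), ∃ y : (EuclideanSpace ℝ (Fin d)), ‖y‖ ≤ R ∧ ∀ (t z : ℝ), W (t,y,z) = W (t,x,z) := by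
    intro x
    set mv : Fin d → ℤ := fun i => -⌊x i / (2*Real.pi)⌋ with hmv
    set τ : (EuclideanSpace ℝ (Fin d)) := ∑ i, ((2*Real.pi)*(mv i : ℝ)) • EuclideanSpace.single i 1 with hτ
    refine ⟨x + τ, ?_, ?_⟩
    · have hτj : ∀ j, τ j = (2*Real.pi) * ((mv j : ℝ)) := by
        intro j
        rw [hτ, WithLp.ofLp_sum, Finset.sum_apply]
        rw [Finset.sum_eq_single j]
        · simp [EuclideanSpace.single_apply]
        · intro b _ hb
          simp [EuclideanSpace.single_apply, (Ne.symm hb : ¬ j = b)]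
        · simp
      have hyj : ∀ j, 0 ≤ (x + τ) j ∧ (x + τ) j ≤ 2*Real.pi := by
        intro j
        have hadd : (x + τ) j = x j + τ j := rfl
        have hfl : ((⌊x j / (2*Real.pi)⌋ : ℤ) : ℝ) ≤ x j / (2*Real.pi) := Int.floor_le _
        have hfl2 : x j / (2*Real.pi) < (⌊x j / (2*Real.pi)⌋ : ℤ) + 1 := Int.lt_floor_add_one _
        have hx : x j = (2*Real.pi) * (x j / (2*Real.pi)) := by field_simp
        have hmvj : ((mv j : ℤ) : ℝ) = -((⌊x j / (2*Real.pi)⌋ : ℤ) : ℝ) := by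
          rw [hmv]; push_cast; ring
        rw [hadd, hτj j, hmvj]
        constructor
        · nlinarith [mul_le_mul_of_nonneg_left hfl h2pi.le]
        · nlinarith [mul_le_mul_of_nonneg_left hfl2.le h2pi.le]
      rw [EuclideanSpace.norm_eq]
      have hsum : ∑ j, ‖(x+τ) j‖^2 ≤ ∑ _j : Fin d, (2*Real.pi)^2 := by
        apply Finset.sum_le_sum
        intro j _
        have h := hyj j
        rw [Real.norm_eq_abs, sq_abs]
        nlinarith [h.1, h.2]
      refine le_trans (Real.sqrt_le_sqrt hsum) ?_
      rw [Finset.sum_const, Finset.card_univ, Fintype.card_fin, nsmul_eq_mul]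
      have hsq : (d:ℝ) * (2*Real.pi)^2 ≤ (2*Real.pi*((d:ℝ)+1))^2 := by
        have h1 : (0:ℝ) ≤ (2*Real.pi)^2 := sq_nonneg _
        have h2 : (d:ℝ) ≤ ((d:ℝ)+1)^2 := by nlinarith [sq_nonneg ((d:ℝ))]
        nlinarith [mul_le_mul_of_nonneg_right h2 h1]
      refine le_trans (Real.sqrt_le_sqrt hsq) ?_
      rw [Real.sqrt_sq (by positivity)]
    · intro t z
      have e : ((t,x,z) : (ℝ × EuclideanSpace ℝ (Fin d) × ℝ)) + (((0:ℝ), τ, (0:ℝ)) : (ℝ × EuclideanSpace ℝ (Fin d) × ℝ)) = ((t, x + τ, z) : (ℝ × EuclideanSpace ℝ (Fin d) × ℝ)) := by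
        simp [Prod.ext_iff]
      have h := hWper mv (t, x, z)
      rw [← hτ] at h
      rw [e] at h
      exact h
  -- the constant K
  set Q : Set (ℝ × (EuclideanSpace ℝ (Fin d))) := Set.Icc 0 T ×ˢ Metric.closedBall (0:(EuclideanSpace ℝ (Fin d))) R with hQdef
  have hQ : IsCompact Q := isCompact_Icc.prod (isCompact_closedBall 0 R)
  obtain ⟨C, hC⟩ : ∃ C, ∀ q ∈ Q, ‖cf (q.1, q.2, ξ)‖ ≤ C := by
    apply hQ.exists_bound_of_continuousOn
    exact (hcfcont.comp (by fun_prop)).continuousOn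
  set K : ℝ := |C| + 1 with hK
  have hK1 : 1 ≤ K := by simp only [hK]; linarith [abs_nonneg C]
  -- the comparison function
  set vf : ℝ × (EuclideanSpace ℝ (Fin d)) → ℝ := fun q =>
    Real.exp (-K*q.1) * W (q.1, q.2, ξ) - lam * Real.exp (-(2*K)*q.1) with hvf
  have hvfcont : Continuous vf := by fun_prop
  obtain ⟨qs, hqsQ, hqsmin⟩ : ∃ qs ∈ Q, ∀ q ∈ Q, vf qs ≤ vf q := by
    obtain ⟨qs, h1, h2⟩ := hQ.exists_isMinOn ⟨(0,0), by
      constructor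
      · exact ⟨le_refl _, hT.le⟩
      · simp [hR]; positivity⟩ hvfcont.continuousOn
    exact ⟨qs, h1, fun q hq => h2 hq⟩
  have hglob : ∀ t ∈ Set.Icc (0:ℝ) T, ∀ x : (EuclideanSpace ℝ (Fin d)), vf qs ≤ vf (t, x) := by
    intro t ht x
    obtain ⟨y, hy, hyW⟩ := hreduce x
    have : vf (t, y) = vf (t, x) := by simp [hvf, hyW]
    rw [← this]
    exact hqsmin (t, y) ⟨ht, by simpa [Metric.mem_closedBall, dist_eq_norm] using hy⟩
  -- nonnegativity of the minimum
  have hm : 0 ≤ vf qs := by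
    by_contra hneg
    push_neg at hneg
    obtain ⟨hts, hxs⟩ := hqsQ
    have hqeta : ((qs.1, qs.2) : ℝ × (EuclideanSpace ℝ (Fin d))) = qs := rfl
    have hts0 : 0 < qs.1 := by
      rcases lt_or_eq_of_le hts.1 with h | h
      · exact h
      · exfalso
        have hv0 : vf qs = W (0, qs.2, ξ) - lam := by
          rw [← hqeta, ← h]
          simp [hvf]
        have hW0 : lam ≤ W (0, qs.2, ξ) := by rw [hW4]; exact hlow qs.2
        rw [hv0] at hneg
        linarith
    have hminX : ∀ i : Fin d, ∀ s : ℝ,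
        W (qs.1, qs.2, ξ) ≤ W (((qs.1, qs.2, ξ) : (ℝ × EuclideanSpace ℝ (Fin d) × ℝ)) + s • exv i) := by
      intro i s
      have e : ((qs.1, qs.2, ξ) : (ℝ × EuclideanSpace ℝ (Fin d) × ℝ)) + s • exv i
          = ((qs.1, qs.2 + s • EuclideanSpace.single i 1, ξ) : (ℝ × EuclideanSpace ℝ (Fin d) × ℝ)) := by
        simp [hexv, Prod.ext_iff]
      rw [e]
      have h1 := hglob qs.1 hts (qs.2 + s • EuclideanSpace.single i 1)
      rw [← hqeta] at h1
      simp only [hvf] at h1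
      have hE := Real.exp_pos (-K*qs.1)
      nlinarith [h1, hE]
    have hfacts : ∀ i : Fin d, dd' (exv i) W (qs.1, qs.2, ξ) = 0
        ∧ 0 ≤ dd' (exv i) (dd' (exv i) W) (qs.1, qs.2, ξ) :=
      fun i => min_line_facts hWs ((qs.1, qs.2, ξ) : (ℝ × EuclideanSpace ℝ (Fin d) × ℝ)) (exv i) (hminX i)
    have hWst : HasDerivAt (fun s => W (s, qs.2, ξ)) (dd' et W (qs.1, qs.2, ξ)) qs.1 :=
      hasDerivAt_sliceT hWdiff qs.1 qs.2 ξ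
    have hexp1 : HasDerivAt (fun s => Real.exp (-K*s)) (-K*Real.exp (-K*qs.1)) qs.1 := by
      have h := ((hasDerivAt_id qs.1).const_mul (-K)).exp
      convert h using 1
      simp only [id_eq, mul_one]
      simp only [id]
      ring
    have hexp2 : HasDerivAt (fun s => Real.exp (-(2*K)*s)) (-(2*K)*Real.exp (-(2*K)*qs.1)) qs.1 := by
      have h := ((hasDerivAt_id qs.1).const_mul (-(2*K))).exp
      convert h using 1
      simp only [id_eq, mul_one]
      simp only [id]
      ring
    have hψ : HasDerivAt (fun s => Real.exp (-K*s) * W (s, qs.2, ξ) - lam * Real.exp (-(2*K)*s))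
        ((-K*Real.exp (-K*qs.1)) * W (qs.1, qs.2, ξ)
          + Real.exp (-K*qs.1) * dd' et W (qs.1, qs.2, ξ)
          - lam * (-(2*K)*Real.exp (-(2*K)*qs.1))) qs.1 :=
      (hexp1.mul hWst).sub (hexp2.const_mul lam)
    have hψmin : ∀ s ∈ Set.Icc (0:ℝ) qs.1,
        (fun s => Real.exp (-K*s) * W (s, qs.2, ξ) - lam * Real.exp (-(2*K)*s)) qs.1
          ≤ (fun s => Real.exp (-K*s) * W (s, qs.2, ξ) - lam * Real.exp (-(2*K)*s)) s := by
      intro s hs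
      have h1 := hglob s ⟨hs.1, le_trans hs.2 hts.2⟩ qs.2
      rw [← hqeta] at h1
      simpa [hvf] using h1
    have hD := deriv_nonpos_of_right_min hψ hts0 hψmin
    have hpdeP := hWpde qs.1 ⟨hts0, hts.2⟩ qs.2
    have hsum1 : ∑ i, ai i (U (qs.1, qs.2, ξ)) * dd' (exv i) W (qs.1, qs.2, ξ) = 0 :=
      Finset.sum_eq_zero fun i _ => by rw [(hfacts i).1, mul_zero]
    have hsum2 : (0:ℝ) ≤ ∑ i, dd' (exv i) (dd' (exv i) W) (qs.1, qs.2, ξ) :=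
      Finset.sum_nonneg fun i _ => (hfacts i).2
    have hcb := hC qs ⟨hts, hxs⟩
    rw [Real.norm_eq_abs] at hcb
    have hcb1 : cf (qs.1, qs.2, ξ) ≤ K - 1 := by
      have := (abs_le.1 hcb).2
      have h2 : C ≤ |C| := le_abs_self C
      simp only [hK]; linarith
    have hcb2 : -(K-1) ≤ cf (qs.1, qs.2, ξ) := by
      have := (abs_le.1 hcb).1
      have h2 : -|C| ≤ -C := by linarith [le_abs_self C]
      simp only [hK]; linarith [neg_abs_le C]
    have hApos := Real.exp_pos (-K*qs.1)
    have hBpos := Real.exp_pos (-(2*K)*qs.1)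
    have hAB : Real.exp (-(2*K)*qs.1) = Real.exp (-K*qs.1) * Real.exp (-K*qs.1) := by
      rw [← Real.exp_add]; ring_nf
    -- from the PDE: time derivative of W bounded below
    have hES : (0:ℝ) ≤ ε * ∑ i, dd' (exv i) (dd' (exv i) W) (qs.1, qs.2, ξ) :=
      mul_nonneg hε.le hsum2
    have h1 : -(cf (qs.1, qs.2, ξ)) * W (qs.1, qs.2, ξ) ≤ dd' et W (qs.1, qs.2, ξ) := by
      nlinarith [hpdeP, hsum1, hES]
    have h2 : Real.exp (-K*qs.1) * (-(cf (qs.1, qs.2, ξ)) * W (qs.1, qs.2, ξ))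
        ≤ Real.exp (-K*qs.1) * dd' et W (qs.1, qs.2, ξ) :=
      mul_le_mul_of_nonneg_left h1 hApos.le
    -- the min value is negative
    have h3 : Real.exp (-K*qs.1) * W (qs.1, qs.2, ξ) < lam * Real.exp (-(2*K)*qs.1) := by
      have he : vf qs = Real.exp (-K*qs.1) * W (qs.1, qs.2, ξ) - lam * Real.exp (-(2*K)*qs.1) := by
        rw [← hqeta]
      rw [he] at hneg
      linarith
    have h4 : (0:ℝ) < K + cf (qs.1, qs.2, ξ) := by linarith
    have h5 : 2*K*(lam * Real.exp (-(2*K)*qs.1))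
        ≤ (K + cf (qs.1, qs.2, ξ)) * (Real.exp (-K*qs.1) * W (qs.1, qs.2, ξ)) := by
      nlinarith [hD, h2]
    have h6 := mul_lt_mul_of_pos_left h3 h4
    have h8 : (0:ℝ) < lam * Real.exp (-(2*K)*qs.1) := mul_pos hlam hBpos
    nlinarith [h5, h6, h8, hcb1]
  -- conclusion
  refine ⟨K, ?_⟩
  intro t ht x
  have h0 := le_trans hm (hglob t ⟨ht.1.le, ht.2⟩ x)
  rw [← hW4 t x ξ]
  have hE : Real.exp (-(2*K)*t) = Real.exp (-K*t) * Real.exp (-K*t) := by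
    rw [← Real.exp_add]; ring_nf
  simp only [hvf] at h0
  rw [hE] at h0
  nlinarith [Real.exp_pos (-K*t)]
end

section
/- In the same setting, assuming $\Xi_{t,x}$ is strictly increasing and surjective for each $(t,x)$ with $t>0$, the unclosed term $m(t,x,v)=\partial_x^2 u(t,\,x-\Xi_{t,x}^{-1}(v)t,\,0)$ satisfies the translation identity $m(t,x,v)=m\big(t,\,0,\,v-\tfrac{x}{t}\big)$ for all $t>0$, $x$, $v$. Equivalently, $\Xi_{t,0}^{-1}(v-x/t)=\Xi_{t,x}^{-1}(v)-x/t$. -/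
open Real Set Filter Topology MeasureTheory intervalIntegral

noncomputable def pd (f : ℝ × ℝ → ℝ) (v : ℝ × ℝ) : ℝ × ℝ → ℝ := fun p => fderiv ℝ f p v

lemma contDiff_pd {f : ℝ × ℝ → ℝ} (hf : ContDiff ℝ (⊤ : ℕ∞) f) (v : ℝ × ℝ) :
    ContDiff ℝ (⊤ : ℕ∞) (pd f v) := by
  exact (ContinuousLinearMap.apply ℝ ℝ v).contDiff.comp (hf.fderiv_right (by simp))

lemma hasDerivAt_slice_x {f : ℝ × ℝ → ℝ} (hf : ContDiff ℝ (⊤ : ℕ∞) f) (t x : ℝ) :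
    HasDerivAt (fun y => f (t, y)) (pd f (0, 1) (t, x)) x := by
  have h := (hf.differentiable (by simp) (t, x)).hasFDerivAt
  have h2 : HasDerivAt (fun y : ℝ => ((t, y) : ℝ × ℝ)) ((0 : ℝ), (1 : ℝ)) x :=
    (hasDerivAt_const x t).prodMk (hasDerivAt_id x)
  exact h.comp_hasDerivAt x h2

lemma hasDerivAt_slice_t {f : ℝ × ℝ → ℝ} (hf : ContDiff ℝ (⊤ : ℕ∞) f) (t x : ℝ) :
    HasDerivAt (fun r => f (r, x)) (pd f (1, 0) (t, x)) t := by
  have h := (hf.differentiable (by simp) (t, x)).hasFDerivAt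
  have h2 : HasDerivAt (fun r : ℝ => ((r, x) : ℝ × ℝ)) ((1 : ℝ), (0 : ℝ)) t :=
    (hasDerivAt_id t).prodMk (hasDerivAt_const t x)
  exact h.comp_hasDerivAt t h2

lemma deriv_slice_x {f : ℝ × ℝ → ℝ} (hf : ContDiff ℝ (⊤ : ℕ∞) f) (t x : ℝ) :
    deriv (fun y => f (t, y)) x = pd f (0, 1) (t, x) := (hasDerivAt_slice_x hf t x).deriv

lemma deriv_slice_t {f : ℝ × ℝ → ℝ} (hf : ContDiff ℝ (⊤ : ℕ∞) f) (t x : ℝ) :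
    deriv (fun r => f (r, x)) t = pd f (1, 0) (t, x) := (hasDerivAt_slice_t hf t x).deriv

lemma deriv2_slice {f : ℝ × ℝ → ℝ} (hf : ContDiff ℝ (⊤ : ℕ∞) f) (t x : ℝ) :
    deriv (fun y => deriv (fun z => f (t, z)) y) x = pd (pd f (0, 1)) (0, 1) (t, x) := by
  have : (fun y => deriv (fun z => f (t, z)) y) = fun y => pd f (0, 1) (t, y) := by
    funext y; exact deriv_slice_x hf t y
  rw [this, deriv_slice_x (contDiff_pd hf _) t x]

lemma pd_sub {f g : ℝ × ℝ → ℝ} (hf : ContDiff ℝ (⊤ : ℕ∞) f) (hg : ContDiff ℝ (⊤ : ℕ∞) g) (v : ℝ × ℝ) :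
    pd (fun p => f p - g p) v = fun p => pd f v p - pd g v p := by
  funext p
  unfold pd
  rw [fderiv_fun_sub (hf.differentiable (by simp) p) (hg.differentiable (by simp) p)]
  rfl


/-- periodicity in x of a partial x-derivative -/
lemma pd_per {f : ℝ × ℝ → ℝ} (hf : ContDiff ℝ (⊤ : ℕ∞) f)
    {P : ℝ} (hper : ∀ t x, f (t, x + P) = f (t, x)) (t x : ℝ) :
    pd f (0, 1) (t, x + P) = pd f (0, 1) (t, x) := by
  rw [← deriv_slice_x hf, ← deriv_slice_x hf]
  rw [← deriv_comp_add_const (fun y => f (t, y)) P x]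
  congr 1
  funext y
  exact hper t y

lemma gron_aux (T : ℝ) (hT : 0 < T) (M : ℝ) (E E' : ℝ → ℝ)
    (hEderiv : ∀ τ, HasDerivAt E (E' τ) τ) (hE0 : E 0 = 0)
    (hEnn : ∀ τ, 0 ≤ E τ) (hkey : ∀ τ, 0 < τ → τ ≤ T → E' τ ≤ M * E τ) : E T = 0 := by
  have hEcont : Continuous E := continuous_iff_continuousAt.mpr fun τ => (hEderiv τ).continuousAt
  have grw : ∀ a, 0 < a → a ≤ T → E T ≤ E a * Real.exp (M * (T - a)) := by
    intro a ha haT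
    have h := le_gronwallBound_of_liminf_deriv_right_le (f := E) (f' := E')
      (δ := E a) (K := M) (ε := 0) (a := a) (b := T) hEcont.continuousOn
      (fun x _ r hr => by
        have h1 := (hEderiv x)
        rw [hasDerivAt_iff_tendsto_slope] at h1
        have h2 : Tendsto (slope E x) (𝓝[>] x) (𝓝 (E' x)) :=
          h1.mono_left (nhdsWithin_mono x fun z hz => hz.ne')
        refine ((h2.eventually_lt_const hr).mono ?_).frequently
        intro z hz
        have : slope E x z = (z - x)⁻¹ * (E z - E x) := by
          rw [slope_def_field]; ring
        rwa [this] at hz)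
      le_rfl
      (fun z hz => by
        have := hkey z (lt_of_lt_of_le ha hz.1) hz.2.le
        linarith)
      T ⟨haT, le_rfl⟩
    rwa [gronwallBound_ε0] at h
  have hlim : Tendsto (fun a => E a * Real.exp (M * (T - a))) (𝓝[>] 0)
      (𝓝 (E 0 * Real.exp (M * (T - 0)))) := by
    apply ContinuousAt.continuousWithinAt
    exact (hEcont.continuousAt).mul ((Real.continuous_exp.comp
      (continuous_const.mul (continuous_const.sub continuous_id))).continuousAt)
  rw [hE0, zero_mul] at hlim
  have hle : E T ≤ 0 := by
    refine ge_of_tendsto hlim ?_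
    filter_upwards [Ioo_mem_nhdsGT_of_mem (⟨le_refl 0, hT⟩ : (0:ℝ) ∈ Ico 0 T)] with a ha
    exact grw a ha.1 ha.2.le
  exact le_antisymm hle (hEnn T)


lemma continuous_slice {g : ℝ × ℝ → ℝ} (hg : Continuous g) (τ : ℝ) :
    Continuous fun y => g (τ, y) := hg.comp (Continuous.prodMk_right τ)

lemma hasDerivAt_sq_slice {g : ℝ × ℝ → ℝ} (hg : ContDiff ℝ (⊤ : ℕ∞) g) (τ y : ℝ) :
    HasDerivAt (fun z => (g (τ, z)) ^ 2) (2 * g (τ, y) * pd g (0, 1) (τ, y)) y := by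
  have h := (hasDerivAt_slice_x hg τ y).pow 2
  norm_num at h
  exact h

set_option maxHeartbeats 1000000 in
lemma energy_hasDerivAt (P : ℝ) (hPpos : 0 < P) (g : ℝ × ℝ → ℝ) (hg : ContDiff ℝ (⊤ : ℕ∞) g)
    (τ₀ : ℝ) :
    HasDerivAt (fun τ => ∫ y in (0:ℝ)..P, (g (τ, y)) ^ 2)
      (∫ y in (0:ℝ)..P, 2 * g (τ₀, y) * pd g (1, 0) (τ₀, y)) τ₀ := by
  have contg : Continuous g := hg.continuous
  have contgt : Continuous (pd g (1, 0)) := (contDiff_pd hg _).continuous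
  obtain ⟨C, hC⟩ := (((isCompact_Icc (a := τ₀ - 1) (b := τ₀ + 1)).prod
    (isCompact_Icc (a := (0:ℝ)) (b := P)))).exists_bound_of_continuousOn
    (f := fun p => 2 * g p * pd g (1, 0) p)
    (((continuous_const.mul contg).mul contgt).continuousOn)
  have main := intervalIntegral.hasDerivAt_integral_of_dominated_loc_of_deriv_le
    (F := fun τ y => (g (τ, y)) ^ 2) (F' := fun τ y => 2 * g (τ, y) * pd g (1, 0) (τ, y))
    (x₀ := τ₀) (a := 0) (b := P) (bound := fun _ => C) (μ := MeasureTheory.volume)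
    (s := Metric.ball τ₀ 1) (Metric.ball_mem_nhds τ₀ one_pos)
    (Filter.Eventually.of_forall fun τ =>
      ((continuous_slice contg τ).pow 2).aestronglyMeasurable)
    (((continuous_slice contg τ₀).pow 2).intervalIntegrable _ _)
    (((continuous_const.mul (continuous_slice contg τ₀)).mul
      (continuous_slice contgt τ₀)).aestronglyMeasurable)
    (Filter.Eventually.of_forall fun y hy => fun τ hτ => by
      have h1 : τ ∈ Icc (τ₀ - 1) (τ₀ + 1) := by
        rw [Metric.mem_ball, Real.dist_eq] at hτ
        have := abs_lt.mp hτ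
        exact ⟨by linarith [this.1], by linarith [this.2]⟩
      have h2 : y ∈ Icc 0 P := by
        rw [Set.uIoc_of_le hPpos.le] at hy
        exact ⟨hy.1.le, hy.2⟩
      exact hC (τ, y) ⟨h1, h2⟩)
    (intervalIntegrable_const)
    (Filter.Eventually.of_forall fun y hy => fun τ hτ => by
      have h := (hasDerivAt_slice_t hg τ y).pow 2
      norm_num at h
      exact h)
  exact main.2

set_option maxHeartbeats 1000000 in
lemma ibp1 (P : ℝ) (g : ℝ × ℝ → ℝ) (hg : ContDiff ℝ (⊤ : ℕ∞) g)
    (hper : ∀ t x, g (t, x + P) = g (t, x)) (τ : ℝ) :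
    ∫ y in (0:ℝ)..P, g (τ, y) * pd (pd g (0, 1)) (0, 1) (τ, y)
      = - ∫ y in (0:ℝ)..P, pd g (0, 1) (τ, y) * pd g (0, 1) (τ, y) := by
  have h := intervalIntegral.integral_mul_deriv_eq_deriv_mul
    (a := (0:ℝ)) (b := P)
    (u := fun y => g (τ, y)) (u' := fun y => pd g (0, 1) (τ, y))
    (v := fun y => pd g (0, 1) (τ, y)) (v' := fun y => pd (pd g (0, 1)) (0, 1) (τ, y))
    (fun y _ => hasDerivAt_slice_x hg τ y)
    (fun y _ => hasDerivAt_slice_x (contDiff_pd hg _) τ y)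
    ((continuous_slice (contDiff_pd hg _).continuous τ).intervalIntegrable _ _)
    ((continuous_slice (contDiff_pd (contDiff_pd hg _) _).continuous τ).intervalIntegrable _ _)
  have b1 : g (τ, P) = g (τ, 0) := by have := hper τ 0; rwa [zero_add] at this
  have b2 : pd g (0, 1) (τ, P) = pd g (0, 1) (τ, 0) := by
    have := pd_per hg hper τ 0; rwa [zero_add] at this
  beta_reduce at h
  rw [h, b1, b2]
  ring

set_option maxHeartbeats 1000000 in
lemma ibp2 (P : ℝ) (f g : ℝ × ℝ → ℝ) (hf : ContDiff ℝ (⊤ : ℕ∞) f) (hg : ContDiff ℝ (⊤ : ℕ∞) g)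
    (hperf : ∀ t x, f (t, x + P) = f (t, x)) (hperg : ∀ t x, g (t, x + P) = g (t, x)) (τ : ℝ) :
    ∫ y in (0:ℝ)..P, f (τ, y) * (2 * g (τ, y) * pd g (0, 1) (τ, y))
      = - ∫ y in (0:ℝ)..P, pd f (0, 1) (τ, y) * (g (τ, y)) ^ 2 := by
  have hu : ∀ y ∈ uIcc (0:ℝ) P, HasDerivAt (fun z => f (τ, z)) (pd f (0, 1) (τ, y)) y :=
    fun y _ => hasDerivAt_slice_x hf τ y
  have hv : ∀ y ∈ uIcc (0:ℝ) P,
      HasDerivAt (fun z => (g (τ, z)) ^ 2) (2 * g (τ, y) * pd g (0, 1) (τ, y)) y :=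
    fun y _ => hasDerivAt_sq_slice hg τ y
  have hu' : IntervalIntegrable (fun y => pd f (0, 1) (τ, y)) MeasureTheory.volume 0 P :=
    (continuous_slice (contDiff_pd hf _).continuous τ).intervalIntegrable _ _
  have hv' : IntervalIntegrable (fun y => 2 * g (τ, y) * pd g (0, 1) (τ, y))
      MeasureTheory.volume 0 P :=
    ((continuous_const.mul (continuous_slice hg.continuous τ)).mul
      (continuous_slice (contDiff_pd hg _).continuous τ)).intervalIntegrable _ _
  have h := intervalIntegral.integral_mul_deriv_eq_deriv_mul hu hv hu' hv'
  have b1 : f (τ, P) = f (τ, 0) := by have := hperf τ 0; rwa [zero_add] at this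
  have b2 : g (τ, P) = g (τ, 0) := by have := hperg τ 0; rwa [zero_add] at this
  beta_reduce at h
  rw [h, b1, b2]
  ring


set_option maxHeartbeats 4000000 in
theorem burgers_unique (ε : ℝ) (hε : 0 < ε) (T : ℝ) (hT : 0 < T)
    (u1 u2 : ℝ → ℝ → ℝ)
    (h1 : ContDiff ℝ (⊤ : ℕ∞) fun p : ℝ × ℝ => u1 p.1 p.2)
    (h2 : ContDiff ℝ (⊤ : ℕ∞) fun p : ℝ × ℝ => u2 p.1 p.2)
    (hper1 : ∀ t x, u1 t (x + 2 * Real.pi) = u1 t x)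
    (hper2 : ∀ t x, u2 t (x + 2 * Real.pi) = u2 t x)
    (pde1 : ∀ t x, 0 < t →
      deriv (fun r => u1 r x) t + u1 t x * deriv (fun y => u1 t y) x
        = ε * deriv (fun y => deriv (fun z => u1 t z) y) x)
    (pde2 : ∀ t x, 0 < t →
      deriv (fun r => u2 r x) t + u2 t x * deriv (fun y => u2 t y) x
        = ε * deriv (fun y => deriv (fun z => u2 t z) y) x)
    (h0 : ∀ x, u1 0 x = u2 0 x) (x : ℝ) :
    u1 T x = u2 T x := by
  set P : ℝ := 2 * Real.pi with hP
  have hPpos : 0 < P := by positivity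
  set f1 : ℝ × ℝ → ℝ := fun p => u1 p.1 p.2 with hf1
  set f2 : ℝ × ℝ → ℝ := fun p => u2 p.1 p.2 with hf2
  set w : ℝ × ℝ → ℝ := fun p => f1 p - f2 p with hw
  have hwC : ContDiff ℝ (⊤ : ℕ∞) w := h1.sub h2
  have hwper : ∀ t x, w (t, x + P) = w (t, x) := by
    intro t x; simp only [hw, hf1, hf2]; rw [hper1 t x, hper2 t x]
  -- partial derivatives
  set wt : ℝ × ℝ → ℝ := pd w (1, 0) with hwt
  set wx : ℝ × ℝ → ℝ := pd w (0, 1) with hwx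
  set wxx : ℝ × ℝ → ℝ := pd wx (0, 1) with hwxx
  have hwxC : ContDiff ℝ (⊤ : ℕ∞) wx := contDiff_pd hwC _
  have hwtC : ContDiff ℝ (⊤ : ℕ∞) wt := contDiff_pd hwC _
  have hwxxC : ContDiff ℝ (⊤ : ℕ∞) wxx := contDiff_pd hwxC _
  have hwxper : ∀ t x, wx (t, x + P) = wx (t, x) := fun t x => pd_per hwC hwper t x
  -- energy
  set E : ℝ → ℝ := fun τ => ∫ y in (0:ℝ)..P, (w (τ, y)) ^ 2 with hE
  set E' : ℝ → ℝ := fun τ => ∫ y in (0:ℝ)..P, 2 * w (τ, y) * wt (τ, y) with hE'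
  have contw : Continuous w := hwC.continuous
  have cslice : ∀ (g : ℝ × ℝ → ℝ), Continuous g → ∀ τ : ℝ, Continuous fun y => g (τ, y) :=
    fun g hg τ => hg.comp (Continuous.prodMk_right τ)
  have hEderiv : ∀ τ, HasDerivAt E (E' τ) τ := fun τ =>
    energy_hasDerivAt P hPpos w hwC τ
  have hEcont : Continuous E :=
    continuous_iff_continuousAt.mpr fun τ => (hEderiv τ).continuousAt
  have hE0 : E 0 = 0 := by
    have : ∀ y : ℝ, w (0, y) = 0 := by
      intro y; simp only [hw, hf1, hf2, sub_eq_zero]; exact h0 y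
    simp only [hE]
    rw [intervalIntegral.integral_congr (g := fun _ => (0:ℝ))
      (fun y _ => by rw [this y]; norm_num)]
    simp
  have hEnn : ∀ τ, 0 ≤ E τ := fun τ =>
    intervalIntegral.integral_nonneg hPpos.le fun y _ => sq_nonneg _
  -- the bound constant
  obtain ⟨M, hM⟩ : ∃ M, ∀ τ ∈ Icc 0 T, ∀ y ∈ Icc 0 P,
      pd f1 (0,1) (τ, y) - 2 * pd f2 (0,1) (τ, y) ≤ M := by
    obtain ⟨C, hC⟩ := (((isCompact_Icc (a := (0:ℝ)) (b := T)).prod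
      (isCompact_Icc (a := (0:ℝ)) (b := P)))).exists_bound_of_continuousOn
      (f := fun p => pd f1 (0,1) p - 2 * pd f2 (0,1) p)
      (((contDiff_pd h1 _).continuous.sub
        (continuous_const.mul (contDiff_pd h2 _).continuous)).continuousOn)
    exact ⟨C, fun τ hτ y hy => (le_abs_self _).trans (hC (τ, y) ⟨hτ, hy⟩)⟩
  -- key derivative bound
  -- converted PDEs
  have hp1 : ∀ τ y : ℝ, 0 < τ → pd f1 (1,0) (τ,y)
      = ε * pd (pd f1 (0,1)) (0,1) (τ,y) - f1 (τ,y) * pd f1 (0,1) (τ,y) := by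
    intro τ y hτ
    have h := pde1 τ y hτ
    rw [show (fun r => u1 r y) = (fun r => f1 (r, y)) from rfl,
      show (fun z => u1 τ z) = (fun z => f1 (τ, z)) from rfl,
      show (fun yy => u1 τ yy) = (fun yy => f1 (τ, yy)) from rfl,
      deriv_slice_t h1, deriv_slice_x h1, deriv2_slice h1] at h
    have : u1 τ y = f1 (τ, y) := rfl
    rw [this] at h
    linarith
  have hp2 : ∀ τ y : ℝ, 0 < τ → pd f2 (1,0) (τ,y)
      = ε * pd (pd f2 (0,1)) (0,1) (τ,y) - f2 (τ,y) * pd f2 (0,1) (τ,y) := by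
    intro τ y hτ
    have h := pde2 τ y hτ
    rw [show (fun r => u2 r y) = (fun r => f2 (r, y)) from rfl,
      show (fun z => u2 τ z) = (fun z => f2 (τ, z)) from rfl,
      show (fun yy => u2 τ yy) = (fun yy => f2 (τ, yy)) from rfl,
      deriv_slice_t h2, deriv_slice_x h2, deriv2_slice h2] at h
    have : u2 τ y = f2 (τ, y) := rfl
    rw [this] at h
    linarith
  have hwt_eq : ∀ p, wt p = pd f1 (1,0) p - pd f2 (1,0) p := by
    intro p; rw [hwt, hw, pd_sub h1 h2]
  have hwx_eq : ∀ p, wx p = pd f1 (0,1) p - pd f2 (0,1) p := by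
    intro p; rw [hwx, hw, pd_sub h1 h2]
  have hwxx_eq : ∀ p, wxx p
      = pd (pd f1 (0,1)) (0,1) p - pd (pd f2 (0,1)) (0,1) p := by
    intro p
    rw [hwxx, show wx = fun q => pd f1 (0,1) q - pd f2 (0,1) q from funext hwx_eq,
      pd_sub (contDiff_pd h1 _) (contDiff_pd h2 _)]
  have hkey : ∀ τ, 0 < τ → τ ≤ T → E' τ ≤ M * E τ := by
    intro τ hτ hτT
    -- pointwise identity
    have hpt : ∀ y : ℝ, 2 * w (τ,y) * wt (τ,y)
        = (2 * ε) * (w (τ,y) * wxx (τ,y))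
          - f1 (τ,y) * (2 * w (τ,y) * wx (τ,y))
          - 2 * pd f2 (0,1) (τ,y) * (w (τ,y)) ^ 2 := by
      intro y
      have e1 := hwt_eq (τ, y)
      have e2 := hwx_eq (τ, y)
      have e3 := hwxx_eq (τ, y)
      have e4 := hp1 τ y hτ
      have e5 := hp2 τ y hτ
      have e6 : w (τ, y) = f1 (τ, y) - f2 (τ, y) := rfl
      rw [e1, e3, e2, e4, e5, e6]
      ring
    -- integration by parts 1
    have I1 : ∫ y in (0:ℝ)..P, w (τ,y) * wxx (τ,y)
        = - ∫ y in (0:ℝ)..P, wx (τ,y) * wx (τ,y) := ibp1 P w hwC hwper τ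
    -- integration by parts 2
    have I2 : ∫ y in (0:ℝ)..P, f1 (τ,y) * (2 * w (τ,y) * wx (τ,y))
        = - ∫ y in (0:ℝ)..P, pd f1 (0,1) (τ,y) * (w (τ,y)) ^ 2 :=
      ibp2 P f1 w h1 hwC (fun a b => hper1 a b) hwper τ
    -- integrability facts
    have int1 : IntervalIntegrable (fun y => (2 * ε) * (w (τ,y) * wxx (τ,y)))
        MeasureTheory.volume 0 P :=
      (continuous_const.mul ((cslice w contw τ).mul
        (cslice wxx hwxxC.continuous τ))).intervalIntegrable _ _
    have int2 : IntervalIntegrable (fun y => f1 (τ,y) * (2 * w (τ,y) * wx (τ,y)))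
        MeasureTheory.volume 0 P :=
      ((cslice f1 h1.continuous τ).mul ((continuous_const.mul
        (cslice w contw τ)).mul (cslice wx hwxC.continuous τ))).intervalIntegrable _ _
    have int3 : IntervalIntegrable (fun y => 2 * pd f2 (0,1) (τ,y) * (w (τ,y)) ^ 2)
        MeasureTheory.volume 0 P :=
      ((continuous_const.mul (cslice (pd f2 (0,1)) (contDiff_pd h2 _).continuous τ)).mul
        ((cslice w contw τ).pow 2)).intervalIntegrable _ _
    have int4 : IntervalIntegrable (fun y => pd f1 (0,1) (τ,y) * (w (τ,y)) ^ 2)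
        MeasureTheory.volume 0 P :=
      ((cslice (pd f1 (0,1)) (contDiff_pd h1 _).continuous τ).mul
        ((cslice w contw τ).pow 2)).intervalIntegrable _ _
    have split : E' τ = (2 * ε) * (∫ y in (0:ℝ)..P, w (τ,y) * wxx (τ,y))
        - (∫ y in (0:ℝ)..P, f1 (τ,y) * (2 * w (τ,y) * wx (τ,y)))
        - ∫ y in (0:ℝ)..P, 2 * pd f2 (0,1) (τ,y) * (w (τ,y)) ^ 2 := by
      simp only [hE']
      rw [intervalIntegral.integral_congr (g := fun y =>
        (2 * ε) * (w (τ,y) * wxx (τ,y)) - f1 (τ,y) * (2 * w (τ,y) * wx (τ,y))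
          - 2 * pd f2 (0,1) (τ,y) * (w (τ,y)) ^ 2) (fun y _ => hpt y)]
      rw [intervalIntegral.integral_sub (int1.sub int2) int3,
        intervalIntegral.integral_sub int1 int2,
        intervalIntegral.integral_const_mul]
    have nn1 : 0 ≤ ∫ y in (0:ℝ)..P, wx (τ,y) * wx (τ,y) :=
      intervalIntegral.integral_nonneg hPpos.le fun y _ => mul_self_nonneg _
    have merge : (∫ y in (0:ℝ)..P, pd f1 (0,1) (τ,y) * (w (τ,y)) ^ 2)
        - (∫ y in (0:ℝ)..P, 2 * pd f2 (0,1) (τ,y) * (w (τ,y)) ^ 2)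
        = ∫ y in (0:ℝ)..P, (pd f1 (0,1) (τ,y) - 2 * pd f2 (0,1) (τ,y)) * (w (τ,y)) ^ 2 := by
      rw [← intervalIntegral.integral_sub int4 int3]
      apply intervalIntegral.integral_congr
      intro y _
      ring
    have mono : (∫ y in (0:ℝ)..P, (pd f1 (0,1) (τ,y) - 2 * pd f2 (0,1) (τ,y)) * (w (τ,y)) ^ 2)
        ≤ ∫ y in (0:ℝ)..P, M * (w (τ,y)) ^ 2 := by
      apply intervalIntegral.integral_mono_on hPpos.le
      · exact (((cslice (pd f1 (0,1)) (contDiff_pd h1 _).continuous τ).sub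
          (continuous_const.mul (cslice (pd f2 (0,1)) (contDiff_pd h2 _).continuous τ))).mul
          ((cslice w contw τ).pow 2)).intervalIntegrable _ _
      · exact (continuous_const.mul ((cslice w contw τ).pow 2)).intervalIntegrable _ _
      · intro y hy
        exact mul_le_mul_of_nonneg_right (hM τ ⟨hτ.le, hτT⟩ y hy) (sq_nonneg _)
    have final_eq : (∫ y in (0:ℝ)..P, M * (w (τ,y)) ^ 2) = M * E τ := by
      simp only [hE]
      rw [intervalIntegral.integral_const_mul]
    rw [split, I1, I2]
    have h2ε : 0 ≤ 2 * ε * ∫ y in (0:ℝ)..P, wx (τ,y) * wx (τ,y) := by positivity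
    linarith
  have hETz : E T = 0 := gron_aux T hT M E E' hEderiv hE0 hEnn hkey
  -- pointwise vanishing
  have hzero : ∀ y, w (T, y) = 0 := by
    have key : ∀ y ∈ Icc 0 P, w (T, y) = 0 := by
      intro y hy
      by_contra hne
      have hpos : 0 < ∫ z in (0:ℝ)..P, (w (T, z)) ^ 2 :=
        intervalIntegral.integral_pos hPpos
          (((cslice w contw T).pow 2).continuousOn)
          (fun z _ => sq_nonneg _)
          ⟨y, hy, lt_of_le_of_ne (sq_nonneg _) (Ne.symm (pow_ne_zero 2 hne))⟩
      simp only [hE] at hETz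
      linarith
    intro y
    have hperw : Function.Periodic (fun z => w (T, z)) P := fun z => hwper T z
    obtain ⟨z, hz, hzy⟩ := hperw.exists_mem_Ico₀ hPpos y
    have : w (T, y) = w (T, z) := hzy
    rw [this]
    exact key z ⟨hz.1, hz.2.le⟩
  have := hzero x
  simpa [hw, hf1, hf2, sub_eq_zero] using this


theorem stmt_14 (ε : ℝ) (hε : 0 < ε)
    (s : ℝ → ℝ) (hs : ContDiff ℝ (⊤ : ℕ∞) s) (hsper : ∀ x, s (x + 2 * Real.pi) = s x)
    (u : ℝ → ℝ → ℝ → ℝ)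
    (hu : ContDiff ℝ (⊤ : ℕ∞) fun p : ℝ × ℝ × ℝ => u p.1 p.2.1 p.2.2)
    (huper : ∀ t x ξ : ℝ, u t (x + 2 * Real.pi) ξ = u t x ξ)
    (hpde : ∀ t x ξ : ℝ, 0 < t →
      deriv (fun r => u r x ξ) t + u t x ξ * deriv (fun y => u t y ξ) x
        = ε * deriv (fun y => deriv (fun z => u t z ξ) y) x)
    (hinit : ∀ x ξ : ℝ, u 0 x ξ = s x + ξ)
    (t : ℝ) (ht : 0 < t)
    (hmono : ∀ x : ℝ, StrictMono fun ξ => u t x ξ)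
    (hsurj : ∀ x : ℝ, Function.Surjective fun ξ => u t x ξ)
    (Ξinv : ℝ → ℝ → ℝ) (hinv : ∀ x v : ℝ, u t x (Ξinv x v) = v) :
    (∀ x v : ℝ, Ξinv 0 (v - x / t) = Ξinv x v - x / t) ∧
    (∀ x v : ℝ,
      deriv (fun y => deriv (fun z => u t z 0) y) (x - Ξinv x v * t)
        = deriv (fun y => deriv (fun z => u t z 0) y) (0 - Ξinv 0 (v - x / t) * t)) := by
  -- the 2-variable function at ξ = 0
  set F : ℝ × ℝ → ℝ := fun p => u p.1 p.2 0 with hF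
  have hFC : ContDiff ℝ (⊤ : ℕ∞) F :=
    hu.comp (contDiff_fst.prodMk (contDiff_snd.prodMk contDiff_const))
  -- converted PDE for F
  have hpF : ∀ τ X : ℝ, 0 < τ → pd F (1,0) (τ,X) + F (τ,X) * pd F (0,1) (τ,X)
      = ε * pd (pd F (0,1)) (0,1) (τ,X) := by
    intro τ X hτ
    have h := hpde τ X 0 hτ
    rw [show (fun r => u r X 0) = (fun r => F (r, X)) from rfl,
      show (fun y => u τ y 0) = (fun y => F (τ, y)) from rfl,
      show (fun y => deriv (fun z => u τ z 0) y) = (fun y => deriv (fun z => F (τ, z)) y)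
        from rfl,
      deriv_slice_t hFC, deriv_slice_x hFC, deriv2_slice hFC] at h
    exact h
  -- the shift identity
  have shift : ∀ (X c : ℝ), u t X c = u t (X - c * t) 0 + c := by
    intro X c
    have key := burgers_unique ε hε t ht (fun τ y => u τ y c)
      (fun τ y => F (τ, y - c * τ) + c)
      (hu.comp (contDiff_fst.prodMk (contDiff_snd.prodMk contDiff_const)))
      ((hFC.comp (contDiff_fst.prodMk (contDiff_snd.sub
        (contDiff_const.mul contDiff_fst)))).add contDiff_const)
      (fun τ y => huper τ y c)
      (fun τ y => by
        show F (τ, y + 2 * Real.pi - c * τ) + c = F (τ, y - c * τ) + c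
        have : y + 2 * Real.pi - c * τ = (y - c * τ) + 2 * Real.pi := by ring
        rw [this]
        show u τ (y - c * τ + 2 * Real.pi) 0 + c = _
        rw [huper]
      )
      (fun τ y hτ => hpde τ y c hτ)
      ?_
      (fun y => by
        show u 0 y c = F (0, y - c * 0) + c
        rw [hinit]
        show s y + c = u 0 (y - c * 0) 0 + c
        rw [hinit]
        simp)
      X
    · exact key
    · -- PDE for the shifted function
      intro τ y hτ
      set q : ℝ × ℝ := (τ, y - c * τ) with hq
      have hin_t : HasDerivAt (fun r : ℝ => ((r, y - c * r) : ℝ × ℝ)) ((1:ℝ), -c) τ := by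
        refine (hasDerivAt_id τ).prodMk ?_
        simpa using ((hasDerivAt_id τ).const_mul c).const_sub y
      have hin_x : ∀ z : ℝ, HasDerivAt (fun yy : ℝ => ((τ, yy - c * τ) : ℝ × ℝ)) ((0:ℝ), 1) z :=
        fun z => (hasDerivAt_const z τ).prodMk ((hasDerivAt_id z).sub_const (c * τ))
      have hdt : HasDerivAt (fun r => F (r, y - c * r) + c)
          (fderiv ℝ F q ((1:ℝ), -c)) τ :=
        by have h := (hFC.differentiable (by simp) q).hasFDerivAt.comp_hasDerivAt τ hin_t; exact h.add_const c
      have hval : fderiv ℝ F q ((1:ℝ), -c)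
          = pd F (1,0) q + (-c) * pd F (0,1) q := by
        have e : ((1:ℝ), -c) = ((1:ℝ), (0:ℝ)) + (-c) • ((0:ℝ), (1:ℝ)) := by
          simp [Prod.ext_iff]
        rw [e, (fderiv ℝ F q).map_add, (fderiv ℝ F q).map_smul, smul_eq_mul]
        rfl
      have hdx : ∀ z : ℝ, HasDerivAt (fun yy => F (τ, yy - c * τ) + c)
          (pd F (0,1) (τ, z - c * τ)) z := fun z =>
        (((hFC.differentiable (by simp) _).hasFDerivAt.comp_hasDerivAt z (hin_x z))).add_const c
      have hdxx : HasDerivAt (fun yy => pd F (0,1) (τ, yy - c * τ))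
          (pd (pd F (0,1)) (0,1) q) y :=
        ((contDiff_pd hFC _).differentiable (by simp) _).hasFDerivAt.comp_hasDerivAt y (hin_x y)
      have e1 : deriv (fun r => F (r, y - c * r) + c) τ
          = pd F (1,0) q + (-c) * pd F (0,1) q := by rw [hdt.deriv, hval]
      have e2 : deriv (fun yy => F (τ, yy - c * τ) + c) y = pd F (0,1) q := (hdx y).deriv
      have e3 : deriv (fun yy => deriv (fun z => F (τ, z - c * τ) + c) yy) y
          = pd (pd F (0,1)) (0,1) q := by
        have : (fun yy => deriv (fun z => F (τ, z - c * τ) + c) yy)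
            = fun yy => pd F (0,1) (τ, yy - c * τ) := by
          funext yy; exact (hdx yy).deriv
        rw [this]
        exact hdxx.deriv
      rw [e1, e2, e3]
      beta_reduce
      have hthis := hpF τ (y - c * τ) hτ
      rw [← hq] at hthis
      linarith
  -- conclude
  have first : ∀ x v : ℝ, Ξinv 0 (v - x / t) = Ξinv x v - x / t := by
    intro x v
    have hinj := (hmono 0).injective
    apply hinj
    show u t 0 (Ξinv 0 (v - x / t)) = u t 0 (Ξinv x v - x / t)
    rw [hinv 0 (v - x / t)]
    set a := Ξinv x v with ha
    have h1 : u t 0 (a - x / t) = u t (0 - (a - x / t) * t) 0 + (a - x / t) :=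
      shift 0 (a - x / t)
    have h2 : v = u t (x - a * t) 0 + a := by
      conv_lhs => rw [← hinv x v]
      exact shift x a
    have h3 : 0 - (a - x / t) * t = x - a * t := by
      field_simp; ring
    rw [h1, h3]
    linarith
  refine ⟨first, fun x v => ?_⟩
  rw [first x v]
  have : 0 - (Ξinv x v - x / t) * t = x - Ξinv x v * t := by field_simp; ring
  rw [this]
end

section
/- Let $u(t,x,\xi)$ solve viscous Burgers $\partial_t u+u\partial_x u=\epsilon\partial_x^2 u$ on $\mathbb{R}_+\times(\mathbb{R}/2\pi\mathbb{Z})$ with initial data $u(0,x,\xi)=\xi\, s(x)$, where $s$ is smooth, $2\pi$-periodic, odd about $0$ and $\pi$ (i.e., $s(x)=-s(2\pi-x)$), and $s>0$ on $(0,\pi)$. Assume the solution is smooth jointly in $(t,x,\xi)$ and the odd symmetry $u(t,2\pi-x,\xi)=-u(t,x,\xi)$ is preserved, so that $u(t,0,\xi)=u(t,\pi,\xi)=0$ for all $(t,\xi)$. Then for every $t>0$ and $\xi$, $\partial_\xi u(t,x,\xi)>0$ for $x\in(0,\pi)$ and $\partial_\xi u(t,x,\xi)<0$ for $x\in(\pi,2\pi)$.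 -/
open Real Set Filter Topology

/-- Weak maximum principle on a parabolic rectangle. -/
lemma mp_lemma (ε T a b : ℝ) (hε : 0 < ε) (hT : 0 < T) (hab : a < b)
    (v vt vx vxx c : ℝ → ℝ → ℝ)
    (hcont : ContinuousOn (fun p : ℝ × ℝ => v p.1 p.2) (Set.Icc 0 T ×ˢ Set.Icc a b))
    (hvt : ∀ t ∈ Set.Ioc 0 T, ∀ x ∈ Set.Ioo a b, HasDerivAt (fun r => v r x) (vt t x) t)
    (hvx : ∀ t ∈ Set.Ioc 0 T, ∀ x ∈ Set.Ioo a b, HasDerivAt (fun y => v t y) (vx t x) x)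
    (hvxx : ∀ t ∈ Set.Ioc 0 T, ∀ x ∈ Set.Ioo a b, HasDerivAt (fun y => vx t y) (vxx t x) x)
    (hineq : ∀ t ∈ Set.Ioc 0 T, ∀ x ∈ Set.Ioo a b, v t x < 0 →
      ε * vxx t x ≤ vt t x + c t x * vx t x + v t x)
    (hinit : ∀ x ∈ Set.Icc a b, 0 ≤ v 0 x)
    (hbda : ∀ t ∈ Set.Icc 0 T, 0 ≤ v t a)
    (hbdb : ∀ t ∈ Set.Icc 0 T, 0 ≤ v t b) :
    ∀ t ∈ Set.Icc 0 T, ∀ x ∈ Set.Icc a b, 0 ≤ v t x := by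
  have hRc : IsCompact (Set.Icc (0:ℝ) T ×ˢ Set.Icc a b) := (isCompact_Icc).prod isCompact_Icc
  have hRne : (Set.Icc (0:ℝ) T ×ˢ Set.Icc a b).Nonempty :=
    ⟨(0, a), Set.mem_prod.2 ⟨Set.left_mem_Icc.2 hT.le, Set.left_mem_Icc.2 hab.le⟩⟩
  obtain ⟨p0, hp0R, hp0min⟩ := hRc.exists_isMinOn hRne hcont
  obtain ⟨t0, x0⟩ := p0
  obtain ⟨ht0, hx0⟩ := Set.mem_prod.1 hp0R
  simp only at ht0 hx0
  by_contra hcon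
  push_neg at hcon
  obtain ⟨t1, ht1, x1, hx1, hv1⟩ := hcon
  have hmemR : ((t1, x1) : ℝ × ℝ) ∈ Set.Icc (0:ℝ) T ×ˢ Set.Icc a b :=
    Set.mem_prod.2 ⟨ht1, hx1⟩
  have hmin_neg : v t0 x0 < 0 := lt_of_le_of_lt (isMinOn_iff.1 hp0min (t1,x1) hmemR) hv1
  have htpos : 0 < t0 := by
    rcases eq_or_lt_of_le ht0.1 with h | h
    · exact absurd hmin_neg (not_lt.2 (by rw [← h]; exact hinit x0 hx0))
    · exact h
  have hxa : a < x0 := by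
    rcases eq_or_lt_of_le hx0.1 with h | h
    · exact absurd hmin_neg (not_lt.2 (by rw [← h]; exact hbda t0 ht0))
    · exact h
  have hxb : x0 < b := by
    rcases eq_or_lt_of_le hx0.2 with h | h
    · exact absurd hmin_neg (not_lt.2 (by rw [h]; exact hbdb t0 ht0))
    · exact h
  have ht0' : t0 ∈ Set.Ioc (0:ℝ) T := ⟨htpos, ht0.2⟩
  have hx0' : x0 ∈ Set.Ioo a b := ⟨hxa, hxb⟩
  have hminx : ∀ y ∈ Set.Icc a b, v t0 x0 ≤ v t0 y := fun y hy =>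
    isMinOn_iff.1 hp0min (t0,y) (Set.mem_prod.2 ⟨ht0, hy⟩)
  have hmint : ∀ r ∈ Set.Icc 0 T, v t0 x0 ≤ v r x0 := fun r hr =>
    isMinOn_iff.1 hp0min (r,x0) (Set.mem_prod.2 ⟨hr, hx0⟩)
  -- vx t0 x0 = 0
  have hvx0 : vx t0 x0 = 0 := by
    have hloc : IsLocalMin (fun y => v t0 y) x0 :=
      IsMinOn.isLocalMin (fun y hy => hminx y hy) (Icc_mem_nhds hxa hxb)
    exact hloc.hasDerivAt_eq_zero (hvx t0 ht0' x0 hx0')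
  -- 0 ≤ vxx t0 x0
  have hvxx0 : 0 ≤ vxx t0 x0 := by
    by_contra hneg
    push_neg at hneg
    have hd := hvxx t0 ht0' x0 hx0'
    have hslope := hasDerivAt_iff_tendsto_slope.1 hd
    have hev : ∀ᶠ y in 𝓝[>] x0, slope (vx t0) x0 y < 0 :=
      (hslope.mono_left (nhdsWithin_mono _ (fun y hy => ne_of_gt hy))).eventually_lt_const hneg
    have hev2 : ∀ᶠ y in 𝓝[>] x0, y < b :=
      (tendsto_id.mono_left nhdsWithin_le_nhds).eventually_lt_const hxb
    obtain ⟨δ, hδ, hδprop⟩ : ∃ δ > 0, ∀ y ∈ Set.Ioo x0 (x0 + δ),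
        slope (vx t0) x0 y < 0 ∧ y < b := by
      have h3 := hev.and hev2
      rw [eventually_nhdsWithin_iff, Metric.eventually_nhds_iff] at h3
      obtain ⟨δ, hδ, hprop⟩ := h3
      exact ⟨δ, hδ, fun y hy => hprop (by
        rw [Real.dist_eq, abs_lt]; constructor <;> nlinarith [hy.1, hy.2])
        (Set.mem_Ioi.2 hy.1)⟩
    have hx2gt : x0 < min (x0 + δ/2) ((x0 + b)/2) := lt_min (by nlinarith) (by nlinarith)
    set x2 := min (x0 + δ/2) ((x0 + b)/2) with hx2def
    have hx2lt : x2 ≤ x0 + δ/2 := min_le_left _ _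
    have hx2b : x2 < b := by
      have := min_le_right (x0 + δ/2) ((x0 + b)/2)
      nlinarith
    have hvxneg : ∀ y ∈ Set.Ioo x0 x2, vx t0 y < 0 := by
      intro y hy
      have hy' : y ∈ Set.Ioo x0 (x0 + δ) := ⟨hy.1, by nlinarith [hy.2, hx2lt]⟩
      have hs := (hδprop y hy').1
      rw [slope_def_field, hvx0] at hs
      have hpos : (0:ℝ) < y - x0 := by nlinarith [hy.1]
      rcases div_neg_iff.1 (by simpa using hs) with ⟨h1, h2⟩ | ⟨h1, h2⟩
      · nlinarith
      · exact h1
    have hanti : StrictAntiOn (fun y => v t0 y) (Set.Icc x0 x2) := by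
      apply strictAntiOn_of_deriv_neg (convex_Icc _ _)
      · exact hcont.comp ((continuous_const.prodMk continuous_id).continuousOn)
          (fun y hy => Set.mem_prod.2 ⟨ht0,
            (⟨le_trans hxa.le hy.1, le_trans hy.2 hx2b.le⟩ : y ∈ Set.Icc a b)⟩)
      · intro y hy
        rw [interior_Icc] at hy
        have hyIoo : y ∈ Set.Ioo a b := ⟨by linarith [hy.1], by linarith [hy.2, hx2b]⟩
        rw [(hvx t0 ht0' y hyIoo).deriv]
        exact hvxneg y hy
    have h1 : v t0 x2 < v t0 x0 := hanti (Set.left_mem_Icc.2 hx2gt.le)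
      (Set.right_mem_Icc.2 hx2gt.le) hx2gt
    have h2 : v t0 x0 ≤ v t0 x2 := hminx x2 ⟨by linarith, hx2b.le⟩
    linarith
  -- vt t0 x0 ≤ 0
  have hvt0 : vt t0 x0 ≤ 0 := by
    have hd := hvt t0 ht0' x0 hx0'
    have hslope := hasDerivAt_iff_tendsto_slope.1 hd
    have hslope' : Tendsto (slope (fun r => v r x0) t0) (𝓝[<] t0) (𝓝 (vt t0 x0)) :=
      hslope.mono_left (nhdsWithin_mono _ (fun y hy => ne_of_lt hy))
    have hne : (𝓝[<] t0).NeBot := nhdsLT_neBot t0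
    apply le_of_tendsto hslope'
    have hev : ∀ᶠ r in 𝓝[<] t0, r ∈ Set.Ioo 0 t0 := Ioo_mem_nhdsLT htpos
    filter_upwards [hev] with r hr
    rw [slope_def_field]
    have hnum : 0 ≤ v r x0 - v t0 x0 := by
      have := hmint r ⟨hr.1.le, le_trans hr.2.le ht0.2⟩
      linarith
    have hden : r - t0 < 0 := by linarith [hr.2]
    rw [div_nonpos_iff]
    left
    exact ⟨hnum, hden.le⟩
  have h := hineq t0 ht0' x0 hx0' hmin_neg
  rw [hvx0] at h
  nlinarith [hmin_neg, hvxx0, hvt0, hε]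


noncomputable def Fu (u : ℝ → ℝ → ℝ → ℝ) : ℝ × ℝ × ℝ → ℝ := fun p => u p.1 p.2.1 p.2.2
noncomputable def Wu (u : ℝ → ℝ → ℝ → ℝ) : ℝ × ℝ × ℝ → ℝ :=
  fun p => fderiv ℝ (Fu u) p (0, 0, 1)

-- line derivative lemmas
lemma hline_t {G : ℝ × ℝ × ℝ → ℝ} {t x ξ : ℝ} (hG : DifferentiableAt ℝ G (t, x, ξ)) :
    HasDerivAt (fun r => G (r, x, ξ)) (fderiv ℝ G (t, x, ξ) (1, 0, 0)) t := by
  have hc : HasDerivAt (fun r : ℝ => ((r, x, ξ) : ℝ × ℝ × ℝ)) ((1:ℝ), (0:ℝ), (0:ℝ)) t :=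
    (hasDerivAt_id t).prodMk ((hasDerivAt_const t x).prodMk (hasDerivAt_const t ξ))
  exact hG.hasFDerivAt.comp_hasDerivAt t hc

lemma hline_x {G : ℝ × ℝ × ℝ → ℝ} {t x ξ : ℝ} (hG : DifferentiableAt ℝ G (t, x, ξ)) :
    HasDerivAt (fun y => G (t, y, ξ)) (fderiv ℝ G (t, x, ξ) (0, 1, 0)) x := by
  have hc : HasDerivAt (fun y : ℝ => ((t, y, ξ) : ℝ × ℝ × ℝ)) ((0:ℝ), (1:ℝ), (0:ℝ)) x :=
    (hasDerivAt_const x t).prodMk ((hasDerivAt_id x).prodMk (hasDerivAt_const x ξ))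
  exact hG.hasFDerivAt.comp_hasDerivAt x hc

lemma hline_xi {G : ℝ × ℝ × ℝ → ℝ} {t x ξ : ℝ} (hG : DifferentiableAt ℝ G (t, x, ξ)) :
    HasDerivAt (fun z => G (t, x, z)) (fderiv ℝ G (t, x, ξ) (0, 0, 1)) ξ := by
  have hc : HasDerivAt (fun z : ℝ => ((t, x, z) : ℝ × ℝ × ℝ)) ((0:ℝ), (0:ℝ), (1:ℝ)) ξ :=
    (hasDerivAt_const ξ t).prodMk ((hasDerivAt_const ξ x).prodMk (hasDerivAt_id ξ))
  exact hG.hasFDerivAt.comp_hasDerivAt ξ hc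

-- symmetry of second derivatives in directional form
lemma symG {G : ℝ × ℝ × ℝ → ℝ} (hG : ContDiff ℝ (⊤ : ℕ∞) G) (p v w : ℝ × ℝ × ℝ) :
    fderiv ℝ (fun q => fderiv ℝ G q v) p w = fderiv ℝ (fun q => fderiv ℝ G q w) p v := by
  have hG' : ContDiff ℝ (⊤ : ℕ∞) (fderiv ℝ G) := hG.fderiv_right (by simp)
  have h1 : ∀ q, HasFDerivAt G (fderiv ℝ G q) q := fun q =>
    (hG.differentiable (by simp) q).hasFDerivAt
  have h2 : HasFDerivAt (fderiv ℝ G) (fderiv ℝ (fderiv ℝ G) p) p :=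
    (hG'.differentiable (by simp) p).hasFDerivAt
  have hsym := second_derivative_symmetric h1 h2 v w
  have e1 : fderiv ℝ (fun q => fderiv ℝ G q v) p =
      (fderiv ℝ (fderiv ℝ G) p).flip v := by
    rw [fderiv_clm_apply (hG'.differentiable (by simp) p) (differentiableAt_const v)]
    simp
  have e2 : fderiv ℝ (fun q => fderiv ℝ G q w) p =
      (fderiv ℝ (fderiv ℝ G) p).flip w := by
    rw [fderiv_clm_apply (hG'.differentiable (by simp) p) (differentiableAt_const w)]
    simp
  rw [e1, e2]
  simpa using hsym.symm

lemma w_pde (ε : ℝ) (u : ℝ → ℝ → ℝ → ℝ)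
    (hu : ContDiff ℝ (⊤ : ℕ∞) fun p : ℝ × ℝ × ℝ => u p.1 p.2.1 p.2.2)
    (hpde : ∀ t x ξ : ℝ, 0 < t →
      deriv (fun r => u r x ξ) t + u t x ξ * deriv (fun y => u t y ξ) x
        = ε * deriv (fun y => deriv (fun z => u t z ξ) y) x) :
    ∀ t x ξ : ℝ, 0 < t →
      fderiv ℝ (Wu u) (t, x, ξ) (1, 0, 0)
        + Wu u (t, x, ξ) * fderiv ℝ (Fu u) (t, x, ξ) (0, 1, 0)
        + u t x ξ * fderiv ℝ (Wu u) (t, x, ξ) (0, 1, 0)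
      = ε * fderiv ℝ (fun q => fderiv ℝ (Wu u) q (0, 1, 0)) (t, x, ξ) (0, 1, 0) := by
  have hF : ContDiff ℝ (⊤ : ℕ∞) (Fu u) := hu
  have hF' : ContDiff ℝ (⊤ : ℕ∞) (fderiv ℝ (Fu u)) := hF.fderiv_right (by simp)
  have hDt : ContDiff ℝ (⊤ : ℕ∞) (fun q => fderiv ℝ (Fu u) q (1, 0, 0)) :=
    hF'.clm_apply contDiff_const
  have hUx : ContDiff ℝ (⊤ : ℕ∞) (fun q => fderiv ℝ (Fu u) q (0, 1, 0)) :=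
    hF'.clm_apply contDiff_const
  have hW : ContDiff ℝ (⊤ : ℕ∞) (Wu u) := hF'.clm_apply contDiff_const
  have hUx' : ContDiff ℝ (⊤ : ℕ∞) (fderiv ℝ (fun q => fderiv ℝ (Fu u) q (0, 1, 0))) :=
    hUx.fderiv_right (by simp)
  have hUxx : ContDiff ℝ (⊤ : ℕ∞) (fun q => fderiv ℝ (fun q' => fderiv ℝ (Fu u) q' (0, 1, 0)) q (0, 1, 0)) :=
    hUx'.clm_apply contDiff_const
  have hW' : ContDiff ℝ (⊤ : ℕ∞) (fderiv ℝ (Wu u)) := hW.fderiv_right (by simp)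
  have hWx : ContDiff ℝ (⊤ : ℕ∞) (fun q => fderiv ℝ (Wu u) q (0, 1, 0)) :=
    hW'.clm_apply contDiff_const
  intro t x ξ ht
  -- step 1 : hpde in directional fderiv form, at all points with positive time
  have step1 : ∀ t' x' ξ' : ℝ, 0 < t' →
      fderiv ℝ (Fu u) (t', x', ξ') (1, 0, 0)
        + Fu u (t', x', ξ') * fderiv ℝ (Fu u) (t', x', ξ') (0, 1, 0)
      = ε * fderiv ℝ (fun q => fderiv ℝ (Fu u) q (0, 1, 0)) (t', x', ξ') (0, 1, 0) := by
    intro t' x' ξ' ht'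
    have h := hpde t' x' ξ' ht'
    have e1 : deriv (fun r => u r x' ξ') t' = fderiv ℝ (Fu u) (t', x', ξ') (1, 0, 0) :=
      (hline_t (hF.differentiable (by simp) _)).deriv
    have e2 : deriv (fun y => u t' y ξ') x' = fderiv ℝ (Fu u) (t', x', ξ') (0, 1, 0) :=
      (hline_x (hF.differentiable (by simp) _)).deriv
    have e3 : deriv (fun y => deriv (fun z => u t' z ξ') y) x'
        = fderiv ℝ (fun q => fderiv ℝ (Fu u) q (0, 1, 0)) (t', x', ξ') (0, 1, 0) := by
      have einner : (fun y => deriv (fun z => u t' z ξ') y)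
          = fun y => fderiv ℝ (Fu u) (t', y, ξ') (0, 1, 0) := by
        funext y
        exact (hline_x (hF.differentiable (by simp) _)).deriv
      rw [einner]
      exact (hline_x (hUx.differentiable (by simp) _)).deriv
    rw [e1, e2, e3] at h
    exact h
  -- step 2 : differentiate step1 in ξ along the line
  -- LHS of step1 as function of ζ
  have hLHS : HasDerivAt
      (fun ζ => fderiv ℝ (Fu u) (t, x, ζ) (1, 0, 0)
        + Fu u (t, x, ζ) * fderiv ℝ (Fu u) (t, x, ζ) (0, 1, 0))
      (fderiv ℝ (fun q => fderiv ℝ (Fu u) q (1, 0, 0)) (t, x, ξ) (0, 0, 1)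
        + (Wu u (t, x, ξ) * fderiv ℝ (Fu u) (t, x, ξ) (0, 1, 0)
          + Fu u (t, x, ξ) * fderiv ℝ (fun q => fderiv ℝ (Fu u) q (0, 1, 0)) (t, x, ξ) (0, 0, 1)))
      ξ := by
    have h1 := hline_xi (G := fun q => fderiv ℝ (Fu u) q (1, 0, 0))
      (hDt.differentiable (by simp) (t, x, ξ))
    have h2 := hline_xi (G := Fu u) (hF.differentiable (by simp) (t, x, ξ))
    have h3 := hline_xi (G := fun q => fderiv ℝ (Fu u) q (0, 1, 0))
      (hUx.differentiable (by simp) (t, x, ξ))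
    exact h1.add (h2.mul h3)
  have hRHS : HasDerivAt
      (fun ζ => ε * fderiv ℝ (fun q => fderiv ℝ (Fu u) q (0, 1, 0)) (t, x, ζ) (0, 1, 0))
      (ε * fderiv ℝ (fun q => fderiv ℝ (fun q' => fderiv ℝ (Fu u) q' (0, 1, 0)) q (0, 1, 0))
        (t, x, ξ) (0, 0, 1)) ξ := by
    have h4 := hline_xi
      (G := fun q => fderiv ℝ (fun q' => fderiv ℝ (Fu u) q' (0, 1, 0)) q (0, 1, 0))
      (hUxx.differentiable (by simp) (t, x, ξ))
    exact h4.const_mul ε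
  have hfun : (fun ζ => fderiv ℝ (Fu u) (t, x, ζ) (1, 0, 0)
        + Fu u (t, x, ζ) * fderiv ℝ (Fu u) (t, x, ζ) (0, 1, 0))
      = (fun ζ => ε * fderiv ℝ (fun q => fderiv ℝ (Fu u) q (0, 1, 0)) (t, x, ζ) (0, 1, 0)) := by
    funext ζ
    exact step1 t x ζ ht
  have heq := (hfun ▸ hLHS).unique hRHS
  -- step 3 : symmetry rewrites
  have s1 : fderiv ℝ (fun q => fderiv ℝ (Fu u) q (1, 0, 0)) (t, x, ξ) (0, 0, 1)
      = fderiv ℝ (Wu u) (t, x, ξ) (1, 0, 0) := symG hF (t, x, ξ) _ _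
  have s2 : fderiv ℝ (fun q => fderiv ℝ (Fu u) q (0, 1, 0)) (t, x, ξ) (0, 0, 1)
      = fderiv ℝ (Wu u) (t, x, ξ) (0, 1, 0) := symG hF (t, x, ξ) _ _
  have s3 : fderiv ℝ (fun q => fderiv ℝ (fun q' => fderiv ℝ (Fu u) q' (0, 1, 0)) q (0, 1, 0))
        (t, x, ξ) (0, 0, 1)
      = fderiv ℝ (fun q => fderiv ℝ (Wu u) q (0, 1, 0)) (t, x, ξ) (0, 1, 0) := by
    have h5 := symG hUx (t, x, ξ) ((0:ℝ), (1:ℝ), (0:ℝ)) ((0:ℝ), (0:ℝ), (1:ℝ))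
    rw [h5]
    have e : (fun q => fderiv ℝ (fun q' => fderiv ℝ (Fu u) q' (0, 1, 0)) q (0, 0, 1))
        = fun q => fderiv ℝ (Wu u) q (0, 1, 0) := by
      funext q
      exact symG hF q _ _
    rw [e]
  rw [s1, s2, s3] at heq
  have hFeq : Fu u (t, x, ξ) = u t x ξ := rfl
  rw [hFeq] at heq
  linarith [heq]

lemma neg_right_of_mul_neg {a b : ℝ} (h : a * b < 0) (ha : 0 < a) : b < 0 := by nlinarith

lemma pos_right_of_mul_pos {a b : ℝ} (h : 0 < a * b) (ha : 0 < a) : 0 < b := by nlinarith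

lemma pos_of_cube_pos {z : ℝ} (h : 0 < z^3) : 0 < z := by
  by_contra hc
  push_neg at hc
  nlinarith [sq_nonneg z]

lemma abs_le_of_sq_le' {y R : ℝ} (hR : 0 ≤ R) (h : y^2 ≤ R^2) : |y| ≤ R := by
  nlinarith [sq_abs y, abs_nonneg y]

lemma cube_nonpos_of_nonpos {z : ℝ} (h : z ≤ 0) : z^3 ≤ 0 := by nlinarith [sq_nonneg z]

lemma Gneg (ε A R B l ρ z y Fv Uv : ℝ) (hε : 0 < ε) (hR : 0 < R)
    (hz : 0 < z) (hy2 : y^2 = R^2 - z)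
    (hBdef : B = 6*A*R + 30*ε) (hlA : (l - A)*(96*ε*R^2) = B^2)
    (h6 : -((Fv - ρ)*y) ≤ A*R) (hUA : Uv ≤ A) :
    -l*z^3 - 6*(Fv - ρ)*y*z^2 + Uv*z^3 - 24*ε*y^2*z + 6*ε*z^2 ≤ 0 := by
  have hbr : 0 ≤ (l - A)*z^2 - B*z + 24*ε*R^2 := by
    have h2 : (l - A)*z^2*(96*ε*R^2) = B^2*z^2 := by rw [mul_right_comm, hlA]
    nlinarith [sq_nonneg (B*z - 48*ε*R^2), h2, mul_pos hε (pow_pos hR 2), sq_nonneg z]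
  have e2 : Uv*z^3 ≤ A*z^3 := mul_le_mul_of_nonneg_right hUA (by positivity)
  have e1 : -6*(Fv - ρ)*y*z^2 ≤ 6*A*R*z^2 := by
    have := mul_le_mul_of_nonneg_left h6 (by positivity : (0:ℝ) ≤ 6*z^2)
    nlinarith [this]
  have e3 := mul_nonneg hz.le hbr
  rw [hy2]
  nlinarith [e1, e2, e3, hBdef]

set_option maxHeartbeats 2000000 in
lemma barrier_pos (ε t₀ x₀ M : ℝ) (w wt wx wxx F Ux : ℝ → ℝ → ℝ) (sc : ℝ → ℝ)
    (hε : 0 < ε) (ht₀ : 0 < t₀) (hx₀ : x₀ ∈ Set.Ioo 0 π)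
    (hcont : ContinuousOn (fun p : ℝ × ℝ => w p.1 p.2) (Set.Icc 0 t₀ ×ˢ Set.Icc 0 π))
    (hwt : ∀ t ∈ Set.Ioc 0 t₀, ∀ x ∈ Set.Ioo 0 π, HasDerivAt (fun r => w r x) (wt t x) t)
    (hwx : ∀ t ∈ Set.Ioc 0 t₀, ∀ x ∈ Set.Ioo 0 π, HasDerivAt (fun y => w t y) (wx t x) x)
    (hwxx : ∀ t ∈ Set.Ioc 0 t₀, ∀ x ∈ Set.Ioo 0 π, HasDerivAt (fun y => wx t y) (wxx t x) x)
    (hpde : ∀ t ∈ Set.Ioc 0 t₀, ∀ x ∈ Set.Ioo 0 π,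
      wt t x + w t x * Ux t x + F t x * wx t x = ε * wxx t x)
    (hM : ∀ t ∈ Set.Icc 0 t₀, ∀ x ∈ Set.Icc 0 π, |F t x| ≤ M ∧ |Ux t x| ≤ M)
    (hsc : Continuous sc) (hscpos : ∀ x ∈ Set.Ioo 0 π, 0 < sc x)
    (hscnn : ∀ x ∈ Set.Icc 0 π, 0 ≤ sc x)
    (hw0 : ∀ x, w 0 x = sc x) (hwa : ∀ t, w t 0 = 0) (hwb : ∀ t, w t π = 0) :
    0 < w t₀ x₀ := by
  have hπ := pi_pos
  have hM0 : 0 ≤ M := le_trans (abs_nonneg _)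
    (hM 0 ⟨le_rfl, ht₀.le⟩ 0 ⟨le_rfl, hπ.le⟩).1
  set A := M + (π/2)/t₀ with hAdef
  have hhalf : 0 < (π/2)/t₀ := by positivity
  have hA0 : 0 ≤ A := by rw [hAdef]; linarith
  set K := 1 + A with hKdef
  clear_value A
  clear_value K
  -- ====== Step 2 : w ≥ 0 on the rectangle ======
  have step2 : ∀ t ∈ Set.Icc 0 t₀, ∀ x ∈ Set.Icc 0 π, 0 ≤ w t x := by
    have hdt : ∀ t ∈ Set.Ioc 0 t₀, ∀ x ∈ Set.Ioo 0 π,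
        HasDerivAt (fun r => Real.exp (-(K*r)) * w r x)
          (Real.exp (-(K*t)) * (wt t x - K * w t x)) t := by
      intro t ht x hx
      have hexp : HasDerivAt (fun r => Real.exp (-(K*r))) (Real.exp (-(K*t)) * -(K*1)) t :=
        (((hasDerivAt_id t).const_mul K).neg).exp
      have h2 := hexp.fun_mul (hwt t ht x hx)
      refine h2.congr_deriv ?_
      ring
    have hdx : ∀ t ∈ Set.Ioc 0 t₀, ∀ x ∈ Set.Ioo 0 π,
        HasDerivAt (fun y => Real.exp (-(K*t)) * w t y)
          (Real.exp (-(K*t)) * wx t x) x := fun t ht x hx =>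
      (hwx t ht x hx).const_mul _
    have hdxx : ∀ t ∈ Set.Ioc 0 t₀, ∀ x ∈ Set.Ioo 0 π,
        HasDerivAt (fun y => Real.exp (-(K*t)) * wx t y)
          (Real.exp (-(K*t)) * wxx t x) x := fun t ht x hx =>
      (hwxx t ht x hx).const_mul _
    have hcont2 : ContinuousOn (fun p : ℝ × ℝ => Real.exp (-(K*p.1)) * w p.1 p.2)
        (Set.Icc 0 t₀ ×ˢ Set.Icc 0 π) :=
      ((Continuous.continuousOn (by fun_prop) :
        ContinuousOn (fun p : ℝ × ℝ => Real.exp (-(K*p.1))) _)).mul hcont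
    have hineq : ∀ t ∈ Set.Ioc 0 t₀, ∀ x ∈ Set.Ioo 0 π, Real.exp (-(K*t)) * w t x < 0 →
        ε * (Real.exp (-(K*t)) * wxx t x) ≤ Real.exp (-(K*t)) * (wt t x - K * w t x)
          + F t x * (Real.exp (-(K*t)) * wx t x) + Real.exp (-(K*t)) * w t x := by
      intro t ht x hx hneg
      have hWn : w t x < 0 := neg_right_of_mul_neg hneg (Real.exp_pos _)
      have hUb := (hM t ⟨ht.1.le, ht.2⟩ x ⟨hx.1.le, hx.2.le⟩).2
      have habs := abs_le.1 hUb
      have hp := hpde t ht x hx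
      have hfac : 0 ≤ Real.exp (-(K*t)) * (-(w t x)) * (Ux t x + A) :=
        mul_nonneg (mul_nonneg (Real.exp_pos _).le (by linarith only [hWn]))
          (by rw [hAdef]; linarith only [habs.1, hhalf])
      have heq : ε * (Real.exp (-(K*t)) * wxx t x)
          = Real.exp (-(K*t)) * (wt t x - K * w t x)
            + F t x * (Real.exp (-(K*t)) * wx t x) + Real.exp (-(K*t)) * w t x
            - Real.exp (-(K*t)) * (-(w t x)) * (Ux t x + A) := by
        rw [hKdef]
        linear_combination (-(Real.exp (-((1+A)*t)))) * hp
      rw [heq]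
      exact sub_le_self _ hfac
    have hmp := mp_lemma ε t₀ 0 π hε ht₀ hπ
      (fun t x => Real.exp (-(K*t)) * w t x)
      (fun t x => Real.exp (-(K*t)) * (wt t x - K * w t x))
      (fun t x => Real.exp (-(K*t)) * wx t x)
      (fun t x => Real.exp (-(K*t)) * wxx t x)
      F hcont2 hdt hdx hdxx hineq
      (fun x hx => by
        simp only [mul_zero, neg_zero, Real.exp_zero, one_mul, hw0 x]
        exact hscnn x hx)
      (fun t ht => by simp only [hwa t, mul_zero, le_refl])
      (fun t ht => by simp only [hwb t, mul_zero, le_refl])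
    intro t ht x hx
    have h := hmp t ht x hx
    nlinarith [Real.exp_pos (-(K*t)), h]
  -- ====== Barrier construction ======
  set R := min (min x₀ (π - x₀)) (π/2) / 2 with hRdef
  have hR : 0 < R := by
    rw [hRdef]
    apply div_pos _ two_pos
    exact lt_min (lt_min hx₀.1 (by linarith [hx₀.2])) (by positivity)
  have h2Rx : 2*R ≤ x₀ := by
    have h1 : min (min x₀ (π - x₀)) (π/2) ≤ x₀ := le_trans (min_le_left _ _) (min_le_left _ _)
    rw [hRdef]; linarith
  have h2Rpi : 2*R ≤ π - x₀ := by
    have h1 : min (min x₀ (π - x₀)) (π/2) ≤ π - x₀ :=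
      le_trans (min_le_left _ _) (min_le_right _ _)
    rw [hRdef]; linarith
  have h2Rh : 2*R ≤ π/2 := by
    have h1 : min (min x₀ (π - x₀)) (π/2) ≤ π/2 := min_le_right _ _
    rw [hRdef]; linarith
  clear_value R
  -- minimum of sc on the starting interval
  have hJne : (Set.Icc (π/2 - R) (π/2 + R)).Nonempty := ⟨π/2, by constructor <;> linarith⟩
  obtain ⟨xm, hxm, hxmin⟩ := isCompact_Icc.exists_isMinOn hJne hsc.continuousOn
  have hJsub : Set.Icc (π/2 - R) (π/2 + R) ⊆ Set.Ioo 0 π := by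
    intro y hy
    constructor
    · linarith [hy.1]
    · linarith [hy.2]
  have hσ : 0 < sc xm := hscpos xm (hJsub hxm)
  set σ := sc xm with hσdef
  have hσle : ∀ y ∈ Set.Icc (π/2 - R) (π/2 + R), σ ≤ sc y := fun y hy => hxmin hy
  set η := σ / R^6 with hηdef
  have hη : 0 < η := div_pos hσ (by positivity)
  clear_value σ
  have hηR6 : η * (R^2)^3 = σ := by
    have h63 : (R^2:ℝ)^3 = R^6 := by ring
    rw [hηdef, h63, div_mul_cancel₀ _ (pow_ne_zero 6 hR.ne')]
  clear_value η
  set ρ := (x₀ - π/2)/t₀ with hρdef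
  have hρt₀ : ρ * t₀ = x₀ - π/2 := div_mul_cancel₀ _ (ne_of_gt ht₀)
  have hρb : |ρ| ≤ (π/2)/t₀ := by
    rw [hρdef, abs_div, abs_of_pos ht₀]
    have : |x₀ - π/2| ≤ π/2 := abs_le.2 ⟨by linarith [hx₀.2], by linarith [hx₀.1]⟩
    gcongr
  clear_value ρ
  set B := 6*A*R + 30*ε with hBdef
  set l := A + B^2/(96*ε*R^2) with hldef
  have hlA : (l - A)*(96*ε*R^2) = B^2 := by
    rw [hldef]; field_simp; ring
  clear_value B
  clear_value l
  -- center path stays well inside (0, π)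
  have hC1 : ∀ t ∈ Set.Icc 0 t₀, 2*R ≤ π/2 + ρ*t := by
    intro t ht
    rcases le_or_gt 0 ρ with h | h
    · nlinarith [mul_nonneg h ht.1]
    · have h1 : ρ*t₀ ≤ ρ*t := mul_le_mul_of_nonpos_left ht.2 h.le
      linarith [hρt₀, h2Rx]
  have hC2 : ∀ t ∈ Set.Icc 0 t₀, π/2 + ρ*t ≤ π - 2*R := by
    intro t ht
    rcases le_or_gt ρ 0 with h | h
    · nlinarith [mul_nonpos_of_nonpos_of_nonneg h ht.1]
    · have h1 : ρ*t ≤ ρ*t₀ := mul_le_mul_of_nonneg_left ht.2 h.le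
      linarith [hρt₀, h2Rpi]
  -- derivative facts for the comparison function
  have hdt3 : ∀ t ∈ Set.Ioc 0 t₀, ∀ x ∈ Set.Ioo 0 π,
      HasDerivAt (fun r => Real.exp (-(K*r)) * (w r x
          - η * Real.exp (-(l*r)) * (R^2 - (x - (π/2 + ρ*r))^2)^3))
        (Real.exp (-(K*t)) * ((wt t x
            - η * Real.exp (-(l*t)) * (-l * (R^2 - (x - (π/2 + ρ*t))^2)^3
              + 6*ρ*(x - (π/2 + ρ*t))*(R^2 - (x - (π/2 + ρ*t))^2)^2))
          - K * (w t x - η * Real.exp (-(l*t)) * (R^2 - (x - (π/2 + ρ*t))^2)^3))) t := by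
    intro t ht x hx
    have hy : HasDerivAt (fun r : ℝ => x - (π/2 + ρ*r)) (0 - (0 + ρ*1)) t :=
      (hasDerivAt_const t x).sub ((hasDerivAt_const t (π/2)).add ((hasDerivAt_id t).const_mul ρ))
    have hz : HasDerivAt (fun r : ℝ => R^2 - (x - (π/2 + ρ*r))^2)
        (0 - (2*(x - (π/2 + ρ*t))^(2-1)*(0 - (0 + ρ*1)))) t :=
      (hasDerivAt_const t (R^2)).sub (by simpa using hy.fun_pow 2)
    have hcube := hz.fun_pow 3
    have hexpl : HasDerivAt (fun r : ℝ => Real.exp (-(l*r))) (Real.exp (-(l*t)) * -(l*1)) t :=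
      (((hasDerivAt_id t).const_mul l).neg).exp
    have hφ := (hexpl.const_mul η).fun_mul hcube
    have hexpK : HasDerivAt (fun r : ℝ => Real.exp (-(K*r))) (Real.exp (-(K*t)) * -(K*1)) t :=
      (((hasDerivAt_id t).const_mul K).neg).exp
    have htotal := hexpK.fun_mul ((hwt t ht x hx).fun_sub hφ)
    refine htotal.congr_deriv ?_
    push_cast
    ring
  have hdx3 : ∀ t ∈ Set.Ioc 0 t₀, ∀ x ∈ Set.Ioo 0 π,
      HasDerivAt (fun y => Real.exp (-(K*t)) * (w t y
          - η * Real.exp (-(l*t)) * (R^2 - (y - (π/2 + ρ*t))^2)^3))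
        (Real.exp (-(K*t)) * (wx t x
          - η * Real.exp (-(l*t)) * ((-6)*(x - (π/2 + ρ*t))*(R^2 - (x - (π/2 + ρ*t))^2)^2))) x := by
    intro t ht x hx
    have hy : HasDerivAt (fun y : ℝ => y - (π/2 + ρ*t)) 1 x := (hasDerivAt_id x).sub_const _
    have hz : HasDerivAt (fun y : ℝ => R^2 - (y - (π/2 + ρ*t))^2)
        (0 - (2*(x - (π/2 + ρ*t))^(2-1)*1)) x :=
      (hasDerivAt_const x (R^2)).sub (by simpa using hy.fun_pow 2)
    have hcube := hz.fun_pow 3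
    have htotal := ((hwx t ht x hx).fun_sub (hcube.const_mul (η * Real.exp (-(l*t))))).const_mul
      (Real.exp (-(K*t)))
    refine htotal.congr_deriv ?_
    push_cast
    ring
  have hdxx3 : ∀ t ∈ Set.Ioc 0 t₀, ∀ x ∈ Set.Ioo 0 π,
      HasDerivAt (fun y => Real.exp (-(K*t)) * (wx t y
          - η * Real.exp (-(l*t)) * ((-6)*(y - (π/2 + ρ*t))*(R^2 - (y - (π/2 + ρ*t))^2)^2)))
        (Real.exp (-(K*t)) * (wxx t x
          - η * Real.exp (-(l*t)) * (24*(x - (π/2 + ρ*t))^2*(R^2 - (x - (π/2 + ρ*t))^2)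
            - 6*(R^2 - (x - (π/2 + ρ*t))^2)^2))) x := by
    intro t ht x hx
    have hy : HasDerivAt (fun y : ℝ => y - (π/2 + ρ*t)) 1 x := (hasDerivAt_id x).sub_const _
    have hz : HasDerivAt (fun y : ℝ => R^2 - (y - (π/2 + ρ*t))^2)
        (0 - (2*(x - (π/2 + ρ*t))^(2-1)*1)) x :=
      (hasDerivAt_const x (R^2)).sub (by simpa using hy.fun_pow 2)
    have hq := ((hy.const_mul (-6)).fun_mul (hz.fun_pow 2))
    have htotal := ((hwxx t ht x hx).fun_sub (hq.const_mul (η * Real.exp (-(l*t))))).const_mul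
      (Real.exp (-(K*t)))
    refine htotal.congr_deriv ?_
    push_cast
    ring
  -- continuity of the comparison function
  have hcont3 : ContinuousOn (fun p : ℝ × ℝ => Real.exp (-(K*p.1)) * (w p.1 p.2
      - η * Real.exp (-(l*p.1)) * (R^2 - (p.2 - (π/2 + ρ*p.1))^2)^3))
      (Set.Icc 0 t₀ ×ˢ Set.Icc 0 π) := by
    apply ContinuousOn.mul
    · exact Continuous.continuousOn (by fun_prop)
    · exact hcont.sub (Continuous.continuousOn (by fun_prop))
  -- the differential inequality for the comparison function
  have hineq3 : ∀ t ∈ Set.Ioc 0 t₀, ∀ x ∈ Set.Ioo 0 π,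
      Real.exp (-(K*t)) * (w t x - η * Real.exp (-(l*t)) * (R^2 - (x - (π/2 + ρ*t))^2)^3) < 0 →
      ε * (Real.exp (-(K*t)) * (wxx t x
          - η * Real.exp (-(l*t)) * (24*(x - (π/2 + ρ*t))^2*(R^2 - (x - (π/2 + ρ*t))^2)
            - 6*(R^2 - (x - (π/2 + ρ*t))^2)^2)))
        ≤ Real.exp (-(K*t)) * ((wt t x
            - η * Real.exp (-(l*t)) * (-l * (R^2 - (x - (π/2 + ρ*t))^2)^3
              + 6*ρ*(x - (π/2 + ρ*t))*(R^2 - (x - (π/2 + ρ*t))^2)^2))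
          - K * (w t x - η * Real.exp (-(l*t)) * (R^2 - (x - (π/2 + ρ*t))^2)^3))
        + F t x * (Real.exp (-(K*t)) * (wx t x
          - η * Real.exp (-(l*t)) * ((-6)*(x - (π/2 + ρ*t))*(R^2 - (x - (π/2 + ρ*t))^2)^2)))
        + Real.exp (-(K*t)) * (w t x - η * Real.exp (-(l*t)) * (R^2 - (x - (π/2 + ρ*t))^2)^3) := by
    intro t ht x hx hneg
    have hw0' : 0 ≤ w t x := step2 t ⟨ht.1.le, ht.2⟩ x ⟨hx.1.le, hx.2.le⟩
    have hey := Real.exp_pos (-(K*t))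
    have hel := Real.exp_pos (-(l*t))
    set y := x - (π/2 + ρ*t) with hydef
    set z := R^2 - y^2 with hzdef
    clear_value y
    have hP0 : w t x - η * Real.exp (-(l*t)) * z^3 < 0 := neg_right_of_mul_neg hneg hey
    have hP : w t x < η * Real.exp (-(l*t)) * z^3 := by linarith only [hP0]
    have hz : 0 < z := by
      have h1 : 0 < η * Real.exp (-(l*t)) * z^3 := by linarith only [hP, hw0']
      exact pos_of_cube_pos (pos_right_of_mul_pos h1 (mul_pos hη hel))
    have hzR : z ≤ R^2 := by
      have := sq_nonneg y
      rw [hzdef]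
      linarith only [this]
    have hy2 : y^2 = R^2 - z := by rw [hzdef]; ring
    clear_value z
    have hFb := (hM t ⟨ht.1.le, ht.2⟩ x ⟨hx.1.le, hx.2.le⟩).1
    have hUb := (hM t ⟨ht.1.le, ht.2⟩ x ⟨hx.1.le, hx.2.le⟩).2
    have habsU := abs_le.1 hUb
    have hyR : |y| ≤ R := abs_le_of_sq_le' hR.le (by linarith only [hy2, hz])
    have hFρ : |F t x - ρ| ≤ A := by
      have h1 : |F t x - ρ| ≤ |F t x| + |ρ| := by
        rw [sub_eq_add_neg]
        exact (abs_add_le _ _).trans (by rw [abs_neg])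
      rw [hAdef]
      linarith only [h1, hFb, hρb]
    have h6 : -((F t x - ρ)*y) ≤ A*R := by
      calc -((F t x - ρ)*y) ≤ |(F t x - ρ)*y| := neg_le_abs _
        _ = |F t x - ρ| * |y| := abs_mul _ _
        _ ≤ A*R := mul_le_mul hFρ hyR (abs_nonneg y) (le_trans (abs_nonneg _) hFρ)
    have hUA : Ux t x ≤ A := by
      rw [hAdef]
      linarith only [habsU.2, hhalf]
    have hG : -l*z^3 - 6*(F t x - ρ)*y*z^2 + Ux t x*z^3 - 24*ε*y^2*z + 6*ε*z^2 ≤ 0 :=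
      Gneg ε A R B l ρ z y (F t x) (Ux t x) hε hR hz hy2 hBdef hlA h6 hUA
    have hp := hpde t ht x hx
    have hfac2 : 0 ≤ (Ux t x + A) * (η * Real.exp (-(l*t)) * z^3 - w t x) := by
      apply mul_nonneg
      · rw [hAdef]; linarith only [habsU.1, hhalf]
      · linarith only [hP]
    have hfac3 : 0 ≤ -(η * Real.exp (-(l*t))
        * (-l*z^3 - 6*(F t x - ρ)*y*z^2 + Ux t x*z^3 - 24*ε*y^2*z + 6*ε*z^2)) := by
      have := mul_nonneg (mul_pos hη hel).le (neg_nonneg.2 hG)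
      linarith only [this]
    have hfinal : 0 ≤ Real.exp (-(K*t)) * (-(η * Real.exp (-(l*t))
        * (-l*z^3 - 6*(F t x - ρ)*y*z^2 + Ux t x*z^3 - 24*ε*y^2*z + 6*ε*z^2))
        - (Ux t x + A) * (w t x - η * Real.exp (-(l*t)) * z^3)) := by
      apply mul_nonneg hey.le
      linarith only [hfac2, hfac3]
    have heq : ε * (Real.exp (-(K*t)) * (wxx t x
          - η * Real.exp (-(l*t)) * (24*y^2*z - 6*z^2)))
        = Real.exp (-(K*t)) * ((wt t x
            - η * Real.exp (-(l*t)) * (-l * z^3 + 6*ρ*y*z^2))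
          - K * (w t x - η * Real.exp (-(l*t)) * z^3))
        + F t x * (Real.exp (-(K*t)) * (wx t x
          - η * Real.exp (-(l*t)) * ((-6)*y*z^2)))
        + Real.exp (-(K*t)) * (w t x - η * Real.exp (-(l*t)) * z^3)
        - Real.exp (-(K*t)) * (-(η * Real.exp (-(l*t))
              * (-l*z^3 - 6*(F t x - ρ)*y*z^2 + Ux t x*z^3 - 24*ε*y^2*z + 6*ε*z^2))
            - (Ux t x + A) * (w t x - η * Real.exp (-(l*t)) * z^3)) := by
      rw [hKdef]
      linear_combination (-(Real.exp (-((1+A)*t)))) * hp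
    rw [heq]
    exact sub_le_self _ hfinal
  -- initial condition
  have hinit3 : ∀ x ∈ Set.Icc 0 π, 0 ≤ Real.exp (-(K*0)) * (w 0 x
      - η * Real.exp (-(l*0)) * (R^2 - (x - (π/2 + ρ*0))^2)^3) := by
    intro x hx
    have h0 : -(K*(0:ℝ)) = 0 := by ring
    have h0' : -(l*(0:ℝ)) = 0 := by ring
    rw [h0, h0', Real.exp_zero, one_mul, mul_one, mul_zero, add_zero, hw0]
    rcases le_or_gt (R^2) ((x - π/2)^2) with hcase | hcase
    · have hb : (R^2 - (x - π/2)^2)^3 ≤ 0 :=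
        cube_nonpos_of_nonpos (by linarith only [hcase])
      have h2 := mul_nonneg hη.le (neg_nonneg.2 hb)
      have h3 := hscnn x hx
      linarith only [h2, h3]
    · have hxJ : x ∈ Set.Icc (π/2 - R) (π/2 + R) := by
        have := abs_le_of_sq_le' hR.le hcase.le
        rw [abs_le] at this
        constructor <;> [linarith only [this.1]; linarith only [this.2]]
      have hσx := hσle x hxJ
      have hcube : (R^2 - (x - π/2)^2)^3 ≤ (R^2)^3 := by
        apply pow_le_pow_left₀ (by linarith only [hcase]) (by nlinarith only [sq_nonneg (x - π/2)])
      have h4 := mul_le_mul_of_nonneg_left hcube hη.le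
      rw [hηR6] at h4
      linarith only [hσx, h4]
  -- lateral boundary conditions
  have hbda3 : ∀ t ∈ Set.Icc 0 t₀, 0 ≤ Real.exp (-(K*t)) * (w t 0
      - η * Real.exp (-(l*t)) * (R^2 - ((0:ℝ) - (π/2 + ρ*t))^2)^3) := by
    intro t ht
    have hC := hC1 t ht
    have hbase : R^2 - ((0:ℝ) - (π/2 + ρ*t))^2 ≤ 0 := by nlinarith only [hC, hR]
    have hb3 := cube_nonpos_of_nonpos hbase
    have h2 := mul_nonneg (mul_pos hη (Real.exp_pos (-(l*t)))).le (neg_nonneg.2 hb3)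
    apply mul_nonneg (Real.exp_pos _).le
    rw [hwa]
    linarith only [h2]
  have hbdb3 : ∀ t ∈ Set.Icc 0 t₀, 0 ≤ Real.exp (-(K*t)) * (w t π
      - η * Real.exp (-(l*t)) * (R^2 - (π - (π/2 + ρ*t))^2)^3) := by
    intro t ht
    have hC := hC2 t ht
    have hbase : R^2 - (π - (π/2 + ρ*t))^2 ≤ 0 := by nlinarith only [hC, hR]
    have hb3 := cube_nonpos_of_nonpos hbase
    have h2 := mul_nonneg (mul_pos hη (Real.exp_pos (-(l*t)))).le (neg_nonneg.2 hb3)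
    apply mul_nonneg (Real.exp_pos _).le
    rw [hwb]
    linarith only [h2]
  -- apply the maximum principle to the comparison function
  have hv3 := mp_lemma ε t₀ 0 π hε ht₀ hπ
    (fun t x => Real.exp (-(K*t)) * (w t x
      - η * Real.exp (-(l*t)) * (R^2 - (x - (π/2 + ρ*t))^2)^3))
    (fun t x => Real.exp (-(K*t)) * ((wt t x
        - η * Real.exp (-(l*t)) * (-l * (R^2 - (x - (π/2 + ρ*t))^2)^3
          + 6*ρ*(x - (π/2 + ρ*t))*(R^2 - (x - (π/2 + ρ*t))^2)^2))
      - K * (w t x - η * Real.exp (-(l*t)) * (R^2 - (x - (π/2 + ρ*t))^2)^3)))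
    (fun t x => Real.exp (-(K*t)) * (wx t x
      - η * Real.exp (-(l*t)) * ((-6)*(x - (π/2 + ρ*t))*(R^2 - (x - (π/2 + ρ*t))^2)^2)))
    (fun t x => Real.exp (-(K*t)) * (wxx t x
      - η * Real.exp (-(l*t)) * (24*(x - (π/2 + ρ*t))^2*(R^2 - (x - (π/2 + ρ*t))^2)
        - 6*(R^2 - (x - (π/2 + ρ*t))^2)^2)))
    F hcont3 hdt3 hdx3 hdxx3 hineq3 hinit3 hbda3 hbdb3
  have hend := hv3 t₀ ⟨ht₀.le, le_rfl⟩ x₀ ⟨hx₀.1.le, hx₀.2.le⟩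
  have hx0c : x₀ - (π/2 + ρ*t₀) = 0 := by
    rw [hρdef, div_mul_cancel₀ _ (ne_of_gt ht₀)]
    ring
  rw [hx0c] at hend
  have hRR : (R^2 - (0:ℝ)^2)^3 = (R^2)^3 := by ring
  rw [hRR] at hend
  have hφpos : 0 < η * Real.exp (-(l*t₀)) * (R^2)^3 := by
    apply mul_pos (mul_pos hη (Real.exp_pos _))
    positivity
  have heyy := Real.exp_pos (-(K*t₀))
  nlinarith only [hend, hφpos, heyy]


theorem stmt_15 (ε : ℝ) (hε : 0 < ε)
    (s : ℝ → ℝ) (hs : ContDiff ℝ (⊤ : ℕ∞) s) (hsper : ∀ x, s (x + 2 * Real.pi) = s x)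
    (hsodd : ∀ x, s x = -s (2 * Real.pi - x))
    (hspos : ∀ x ∈ Set.Ioo (0 : ℝ) Real.pi, 0 < s x)
    (u : ℝ → ℝ → ℝ → ℝ)
    (hu : ContDiff ℝ (⊤ : ℕ∞) fun p : ℝ × ℝ × ℝ => u p.1 p.2.1 p.2.2)
    (huper : ∀ t x ξ : ℝ, u t (x + 2 * Real.pi) ξ = u t x ξ)
    (hpde : ∀ t x ξ : ℝ, 0 < t →
      deriv (fun r => u r x ξ) t + u t x ξ * deriv (fun y => u t y ξ) x
        = ε * deriv (fun y => deriv (fun z => u t z ξ) y) x)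
    (hinit : ∀ x ξ : ℝ, u 0 x ξ = ξ * s x)
    (hodd : ∀ t x ξ : ℝ, u t (2 * Real.pi - x) ξ = -u t x ξ) :
    ∀ t : ℝ, 0 < t → ∀ ξ : ℝ,
      (∀ x ∈ Set.Ioo (0 : ℝ) Real.pi, 0 < deriv (fun z => u t x z) ξ) ∧
      (∀ x ∈ Set.Ioo Real.pi (2 * Real.pi), deriv (fun z => u t x z) ξ < 0) := by
  intro t₀ ht₀ ξ₀
  have hπ := Real.pi_pos
  have hF : ContDiff ℝ (⊤ : ℕ∞) (Fu u) := hu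
  have hF' : ContDiff ℝ (⊤ : ℕ∞) (fderiv ℝ (Fu u)) := hF.fderiv_right (by simp)
  have hW : ContDiff ℝ (⊤ : ℕ∞) (Wu u) := hF'.clm_apply contDiff_const
  have hUxc : ContDiff ℝ (⊤ : ℕ∞) (fun q => fderiv ℝ (Fu u) q ((0:ℝ),(1:ℝ),(0:ℝ))) :=
    hF'.clm_apply contDiff_const
  have hW' : ContDiff ℝ (⊤ : ℕ∞) (fderiv ℝ (Wu u)) := hW.fderiv_right (by simp)
  have hWx : ContDiff ℝ (⊤ : ℕ∞) (fun q => fderiv ℝ (Wu u) q ((0:ℝ),(1:ℝ),(0:ℝ))) :=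
    hW'.clm_apply contDiff_const
  -- the ξ-derivative of u equals Wu u
  have hwval : ∀ t x ξ : ℝ, deriv (fun z => u t x z) ξ = Wu u (t,x,ξ) := fun t x ξ =>
    (hline_xi (G := Fu u) (hF.differentiable (by simp) _)).deriv
  -- facts about s
  have s0 : s 0 = 0 := by
    have h := hsodd 0
    have h2 := hsper 0
    have e : 2*Real.pi - 0 = 0 + 2*Real.pi := by ring
    rw [e, h2] at h
    linarith
  have spi : s Real.pi = 0 := by
    have h := hsodd Real.pi
    have e : 2*Real.pi - Real.pi = Real.pi := by ring
    rw [e] at h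
    linarith
  have snonneg : ∀ x ∈ Set.Icc (0:ℝ) Real.pi, 0 ≤ s x := by
    intro x hx
    rcases eq_or_lt_of_le hx.1 with h | h
    · rw [← h, s0]
    · rcases eq_or_lt_of_le hx.2 with h2 | h2
      · rw [h2, spi]
      · exact (hspos x ⟨h, h2⟩).le
  -- boundary values of u and w
  have huz0 : ∀ t ξ : ℝ, u t 0 ξ = 0 := by
    intro t ξ
    have h := hodd t (2*Real.pi) ξ
    have e : 2*Real.pi - 2*Real.pi = 0 := by ring
    rw [e] at h
    have h2 := huper t 0 ξ
    have e2 : (0:ℝ) + 2*Real.pi = 2*Real.pi := by ring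
    rw [e2] at h2
    linarith [h, h2]
  have huzpi : ∀ t ξ : ℝ, u t Real.pi ξ = 0 := by
    intro t ξ
    have h := hodd t Real.pi ξ
    have e : 2*Real.pi - Real.pi = Real.pi := by ring
    rw [e] at h
    linarith
  have hw0' : ∀ x : ℝ, Wu u (0,x,ξ₀) = s x := by
    intro x
    rw [← hwval 0 x ξ₀]
    have e : (fun z => u 0 x z) = fun z => z * s x := funext fun z => hinit x z
    have hD : HasDerivAt (fun z : ℝ => z * s x) (1 * s x) ξ₀ :=
      (hasDerivAt_id ξ₀).mul_const (s x)
    rw [e, hD.deriv, one_mul]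
  have hwa' : ∀ t : ℝ, Wu u (t,0,ξ₀) = 0 := by
    intro t
    rw [← hwval t 0 ξ₀]
    have e : (fun z => u t 0 z) = fun _ => (0:ℝ) := funext fun z => huz0 t z
    rw [e]
    exact deriv_const _ _
  have hwb' : ∀ t : ℝ, Wu u (t,Real.pi,ξ₀) = 0 := by
    intro t
    rw [← hwval t Real.pi ξ₀]
    have e : (fun z => u t Real.pi z) = fun _ => (0:ℝ) := funext fun z => huzpi t z
    rw [e]
    exact deriv_const _ _
  -- joint continuity on the closed rectangle
  have hembc : Continuous (fun p : ℝ × ℝ => ((p.1, p.2, ξ₀) : ℝ × ℝ × ℝ)) :=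
    continuous_fst.prodMk (continuous_snd.prodMk continuous_const)
  have hcont : ContinuousOn (fun p : ℝ × ℝ => Wu u (p.1, p.2, ξ₀))
      (Set.Icc 0 t₀ ×ˢ Set.Icc 0 Real.pi) :=
    (hW.continuous.comp hembc).continuousOn
  -- bounds on the coefficients
  have hKc : IsCompact (Set.Icc (0:ℝ) t₀ ×ˢ Set.Icc (0:ℝ) Real.pi) :=
    isCompact_Icc.prod isCompact_Icc
  obtain ⟨M1, hM1⟩ := hKc.exists_bound_of_continuousOn
    ((hF.continuous.comp hembc).continuousOn :
      ContinuousOn (fun p : ℝ × ℝ => Fu u (p.1, p.2, ξ₀)) _)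
  obtain ⟨M2, hM2⟩ := hKc.exists_bound_of_continuousOn
    ((hUxc.continuous.comp hembc).continuousOn :
      ContinuousOn (fun p : ℝ × ℝ => fderiv ℝ (Fu u) (p.1, p.2, ξ₀) ((0:ℝ),(1:ℝ),(0:ℝ))) _)
  have hM : ∀ t ∈ Set.Icc (0:ℝ) t₀, ∀ x ∈ Set.Icc (0:ℝ) Real.pi,
      |u t x ξ₀| ≤ max M1 M2 ∧
      |fderiv ℝ (Fu u) (t,x,ξ₀) ((0:ℝ),(1:ℝ),(0:ℝ))| ≤ max M1 M2 := by
    intro t ht x hx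
    have h1 : |Fu u (t,x,ξ₀)| ≤ M1 := by
      simpa using hM1 (t,x) (Set.mem_prod.2 ⟨ht, hx⟩)
    have h2 : |fderiv ℝ (Fu u) (t,x,ξ₀) ((0:ℝ),(1:ℝ),(0:ℝ))| ≤ M2 := by
      simpa using hM2 (t,x) (Set.mem_prod.2 ⟨ht, hx⟩)
    exact ⟨le_trans h1 (le_max_left _ _), le_trans h2 (le_max_right _ _)⟩
  -- derivative facts
  have hwt : ∀ t ∈ Set.Ioc (0:ℝ) t₀, ∀ x ∈ Set.Ioo (0:ℝ) Real.pi,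
      HasDerivAt (fun r => Wu u (r,x,ξ₀)) (fderiv ℝ (Wu u) (t,x,ξ₀) ((1:ℝ),(0:ℝ),(0:ℝ))) t :=
    fun t _ x _ => hline_t (hW.differentiable (by simp) _)
  have hwx : ∀ t ∈ Set.Ioc (0:ℝ) t₀, ∀ x ∈ Set.Ioo (0:ℝ) Real.pi,
      HasDerivAt (fun y => Wu u (t,y,ξ₀)) (fderiv ℝ (Wu u) (t,x,ξ₀) ((0:ℝ),(1:ℝ),(0:ℝ))) x :=
    fun t _ x _ => hline_x (hW.differentiable (by simp) _)
  have hwxx : ∀ t ∈ Set.Ioc (0:ℝ) t₀, ∀ x ∈ Set.Ioo (0:ℝ) Real.pi,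
      HasDerivAt (fun y => fderiv ℝ (Wu u) (t,y,ξ₀) ((0:ℝ),(1:ℝ),(0:ℝ)))
        (fderiv ℝ (fun q => fderiv ℝ (Wu u) q ((0:ℝ),(1:ℝ),(0:ℝ))) (t,x,ξ₀)
          ((0:ℝ),(1:ℝ),(0:ℝ))) x :=
    fun t _ x _ => hline_x (hWx.differentiable (by simp) _)
  -- the PDE for w
  have hpdeW : ∀ t ∈ Set.Ioc (0:ℝ) t₀, ∀ x ∈ Set.Ioo (0:ℝ) Real.pi,
      fderiv ℝ (Wu u) (t,x,ξ₀) ((1:ℝ),(0:ℝ),(0:ℝ))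
        + Wu u (t,x,ξ₀) * fderiv ℝ (Fu u) (t,x,ξ₀) ((0:ℝ),(1:ℝ),(0:ℝ))
        + u t x ξ₀ * fderiv ℝ (Wu u) (t,x,ξ₀) ((0:ℝ),(1:ℝ),(0:ℝ))
      = ε * fderiv ℝ (fun q => fderiv ℝ (Wu u) q ((0:ℝ),(1:ℝ),(0:ℝ))) (t,x,ξ₀)
          ((0:ℝ),(1:ℝ),(0:ℝ)) :=
    fun t ht x _ => w_pde ε u hu hpde t x ξ₀ ht.1
  -- strict positivity on (0, π)
  have main : ∀ x₀ ∈ Set.Ioo (0:ℝ) Real.pi, 0 < Wu u (t₀, x₀, ξ₀) := by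
    intro x₀ hx₀
    exact barrier_pos ε t₀ x₀ (max M1 M2)
      (fun t x => Wu u (t,x,ξ₀))
      (fun t x => fderiv ℝ (Wu u) (t,x,ξ₀) ((1:ℝ),(0:ℝ),(0:ℝ)))
      (fun t x => fderiv ℝ (Wu u) (t,x,ξ₀) ((0:ℝ),(1:ℝ),(0:ℝ)))
      (fun t x => fderiv ℝ (fun q => fderiv ℝ (Wu u) q ((0:ℝ),(1:ℝ),(0:ℝ))) (t,x,ξ₀)
        ((0:ℝ),(1:ℝ),(0:ℝ)))
      (fun t x => u t x ξ₀)
      (fun t x => fderiv ℝ (Fu u) (t,x,ξ₀) ((0:ℝ),(1:ℝ),(0:ℝ)))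
      s hε ht₀ hx₀ hcont hwt hwx hwxx hpdeW hM hs.continuous hspos snonneg hw0' hwa' hwb'
  constructor
  · intro x hx
    rw [hwval t₀ x ξ₀]
    exact main x hx
  · intro x hx
    have hoddf : (fun z => u t₀ x z) = fun z => -u t₀ (2*Real.pi - x) z := by
      funext z
      have h := hodd t₀ (2*Real.pi - x) z
      have e : 2*Real.pi - (2*Real.pi - x) = x := by ring
      rw [e] at h
      linarith [h]
    rw [hoddf, deriv.fun_neg]
    have h2 : (2*Real.pi - x) ∈ Set.Ioo (0:ℝ) Real.pi := ⟨by linarith [hx.2], by linarith [hx.1]⟩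
    have h3 := main (2*Real.pi - x) h2
    rw [hwval t₀ (2*Real.pi - x) ξ₀]
    linarith
end
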